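/- arXiv:2508.15023 — 9 statements merged into one kernel-verified Lean document; each statement's English description precedes it below -/
import Mathlib

section
/- Let c > 0, let σ : ℝ → ℝ be continuously differentiable with compact support, let f : ℝ → ℝ be continuously differentiable, and define G(s) = ∫_{+∞}^{|s|} s′ σ(s′) ds′. Then the function u(r,t) = (1/(2 c r)) ∫₀ᵗ f(t − τ) ( G(r + c τ) − G(r − c τ) ) dτ satisfies the forced radial wave equation ∂²u/∂t²(r,t) = c² r⁻² ∂/∂r( r² ∂u/∂r(r,t) ) + σ(r) f(t) for all r > 0 and t > 0, together with the zero initial conditions u(r,0) = 0 and ∂u/∂t(r,0) = 0. -/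
open Real Set MeasureTheory intervalIntegral Filter Metric Asymptotics Topology

lemma aux_param_deriv (K K' : ℝ → ℝ → ℝ) (a b x₀ : ℝ)
    (hK : Continuous fun p : ℝ × ℝ => K p.1 p.2)
    (hK' : Continuous fun p : ℝ × ℝ => K' p.1 p.2)
    (hKd : ∀ x τ, HasDerivAt (fun y => K y τ) (K' x τ) x) :
    HasDerivAt (fun x => ∫ τ in a..b, K x τ) (∫ τ in a..b, K' x₀ τ) x₀ := by
  have hKc : ∀ x, Continuous fun τ => K x τ :=
    fun x => hK.comp (continuous_const.prodMk continuous_id)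
  have hK'c : ∀ x, Continuous fun τ => K' x τ :=
    fun x => hK'.comp (continuous_const.prodMk continuous_id)
  obtain ⟨M, hM⟩ : ∃ M, ∀ p ∈ (Icc (x₀ - 1) (x₀ + 1)) ×ˢ uIcc a b, ‖K' p.1 p.2‖ ≤ M :=
    (isCompact_Icc.prod isCompact_uIcc).exists_bound_of_continuousOn hK'.continuousOn
  refine (intervalIntegral.hasDerivAt_integral_of_dominated_loc_of_deriv_le
    (F := K) (F' := K') (bound := fun _ => M) (s := ball x₀ 1) (ball_mem_nhds x₀ one_pos) ?_ ?_ ?_ ?_ ?_ ?_).2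
  · exact .of_forall fun x => (hKc x).aestronglyMeasurable
  · exact (hKc x₀).intervalIntegrable a b
  · exact (hK'c x₀).aestronglyMeasurable
  · refine .of_forall fun τ hτ x hx => hM (x, τ) ?_
    constructor
    · have := mem_ball_iff_norm.1 hx
      have : |x - x₀| < 1 := by simpa [Real.norm_eq_abs] using this
      constructor <;> [linarith [abs_le.1 this.le |>.1]; linarith [abs_le.1 this.le |>.2]]
    · exact uIoc_subset_uIcc hτ
  · exact intervalIntegrable_const
  · exact .of_forall fun τ hτ x hx => hKd x τ

lemma aux_endpoint_deriv (K : ℝ → ℝ → ℝ) (t₀ : ℝ)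
    (hK : Continuous fun p : ℝ × ℝ => K p.1 p.2) :
    HasDerivAt (fun t => ∫ τ in t₀..t, K t τ) (K t₀ t₀) t₀ := by
  have hKc : ∀ x, Continuous fun τ => K x τ :=
    fun x => hK.comp (continuous_const.prodMk continuous_id)
  rw [hasDerivAt_iff_isLittleO, Asymptotics.isLittleO_iff]
  intro ε hε
  obtain ⟨δ, hδpos, hδ⟩ := Metric.continuousAt_iff.1 hK.continuousAt ε hε
  filter_upwards [Metric.ball_mem_nhds t₀ hδpos] with t ht
  have htd : |t - t₀| < δ := by simpa [Real.dist_eq] using ht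
  have hval : ∀ τ ∈ Set.uIoc t₀ t, ‖K t τ - K t₀ t₀‖ ≤ ε := by
    intro τ hτ
    have h1 : |τ - t₀| ≤ |t - t₀| := by
      rcases le_total t₀ t with h | h
      · rw [Set.uIoc_of_le h] at hτ
        rw [abs_of_nonneg (by linarith [hτ.1.le])]
        rw [abs_of_nonneg (by linarith)]
        linarith [hτ.2]
      · rw [Set.uIoc_of_ge h] at hτ
        rw [abs_of_nonpos (by linarith [hτ.2])]
        rw [abs_of_nonpos (by linarith)]
        linarith [hτ.1]
    have hdist : dist ((t, τ) : ℝ × ℝ) (t₀, t₀) < δ := by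
      rw [Prod.dist_eq]
      exact max_lt (by simpa [Real.dist_eq] using htd)
        (by simp only [Real.dist_eq]; exact lt_of_le_of_lt h1 htd)
    have := hδ hdist
    simpa [Real.dist_eq] using this.le
  have hint : IntervalIntegrable (fun τ => K t τ) volume t₀ t := (hKc t).intervalIntegrable _ _
  have key : (∫ τ in t₀..t, K t τ) - (∫ τ in t₀..t₀, K t₀ τ) - (t - t₀) • K t₀ t₀
      = ∫ τ in t₀..t, (K t τ - K t₀ t₀) := by
    rw [intervalIntegral.integral_sub hint intervalIntegrable_const]
    simp [intervalIntegral.integral_const]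
  rw [key]
  calc ‖∫ τ in t₀..t, (K t τ - K t₀ t₀)‖ ≤ ε * |t - t₀| :=
        intervalIntegral.norm_integral_le_of_norm_le_const hval
    _ = ε * ‖t - t₀‖ := by rw [Real.norm_eq_abs]

lemma aux_leib (P P' : ℝ → ℝ → ℝ) (t₀ : ℝ)
    (hP : Continuous fun p : ℝ × ℝ => P p.1 p.2)
    (hP' : Continuous fun p : ℝ × ℝ => P' p.1 p.2)
    (hPd : ∀ x τ, HasDerivAt (fun y => P y τ) (P' x τ) x) :
    HasDerivAt (fun t => ∫ τ in (0:ℝ)..t, P t τ)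
      ((∫ τ in (0:ℝ)..t₀, P' t₀ τ) + P t₀ t₀) t₀ := by
  have hPc : ∀ x, Continuous fun τ => P x τ :=
    fun x => hP.comp (continuous_const.prodMk continuous_id)
  have h1 := aux_param_deriv P P' 0 t₀ t₀ hP hP' hPd
  have h2 := aux_endpoint_deriv P t₀ hP
  have key : (fun t => ∫ τ in (0:ℝ)..t, P t τ)
      = fun t => (∫ τ in (0:ℝ)..t₀, P t τ) + ∫ τ in t₀..t, P t τ := by
    funext t
    rw [intervalIntegral.integral_add_adjacent_intervals
      ((hPc t).intervalIntegrable _ _) ((hPc t).intervalIntegrable _ _)]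
  rw [key]
  exact h1.add h2

lemma aux_H_deriv (σ : ℝ → ℝ) (hσ : ContDiff ℝ 1 σ) (hσsupp : HasCompactSupport σ) :
    ∀ y : ℝ, HasDerivAt (fun y => -∫ x in Ioi y, x * σ x) (y * σ y) y := by
  intro y
  set ρ : ℝ → ℝ := fun x => x * σ x with hρ
  have hρc : Continuous ρ := continuous_id.mul hσ.continuous
  have hρint : Integrable ρ := hρc.integrable_of_hasCompactSupport hσsupp.mul_left
  have key : ∀ z : ℝ, (-∫ x in Ioi z, ρ x)
      = (∫ x in (0:ℝ)..z, ρ x) + ((∫ x in Iic (0:ℝ), ρ x) - ∫ x, ρ x) := by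
    intro z
    have h1 : (∫ x in Iic z, ρ x) + (∫ x in Ioi z, ρ x) = ∫ x, ρ x := by
      rw [← MeasureTheory.integral_add_compl (measurableSet_Iic (a := z)) hρint, Set.compl_Iic]
    have h2 : (∫ x in Iic z, ρ x) - (∫ x in Iic (0:ℝ), ρ x) = ∫ x in (0:ℝ)..z, ρ x :=
      intervalIntegral.integral_Iic_sub_Iic hρint.integrableOn hρint.integrableOn
    linarith
  have hFTC : HasDerivAt (fun z => ∫ x in (0:ℝ)..z, ρ x) (ρ y) y :=
    (hρc.integral_hasStrictDerivAt 0 y).hasDerivAt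
  have := hFTC.add_const ((∫ x in Iic (0:ℝ), ρ x) - ∫ x, ρ x)
  exact this.congr_of_eventuallyEq (Filter.EventuallyEq.of_eq (funext key))

lemma aux_G_deriv (σ : ℝ → ℝ) (hσ : ContDiff ℝ 1 σ) (hσsupp : HasCompactSupport σ)
    (G : ℝ → ℝ) (hG : ∀ s : ℝ, G s = - ∫ x in Ioi |s|, x * σ x) :
    ∀ s : ℝ, HasDerivAt G (s * σ |s|) s := by
  intro s
  have hH := aux_H_deriv σ hσ hσsupp
  set H : ℝ → ℝ := fun y => -∫ x in Ioi y, x * σ x with hHdef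
  have hGH : ∀ s : ℝ, G s = H |s| := hG
  rcases lt_trichotomy s 0 with hs | hs | hs
  · have : HasDerivAt (fun y => H (-y)) (s * σ (-s)) s := by
      have := (hH (-s)).comp s (hasDerivAt_neg s)
      exact this.congr_deriv (by ring)
    have heq : G =ᶠ[𝓝 s] fun y => H (-y) := by
      filter_upwards [eventually_lt_nhds hs] with y hy
      rw [hGH y, abs_of_neg hy]
    rw [abs_of_neg hs]
    exact this.congr_of_eventuallyEq heq
  · subst hs
    have h0 : (fun y : ℝ => H y - H 0) =o[𝓝 0] fun y => y := by
      have := hH 0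
      rw [hasDerivAt_iff_isLittleO] at this
      simpa using this
    have h1 : (fun y : ℝ => H |y| - H 0) =o[𝓝 0] fun y => |y| :=
      h0.comp_tendsto (continuous_abs.tendsto' 0 0 abs_zero)
    have h2 : (fun y : ℝ => H |y| - H 0) =o[𝓝 0] fun y => y := by
      simp only [← Real.norm_eq_abs] at h1
      exact Asymptotics.isLittleO_norm_right.1 h1
    rw [hasDerivAt_iff_isLittleO]
    simpa [hGH, abs_zero] using h2
  · have heq : G =ᶠ[𝓝 s] H := by
      filter_upwards [eventually_gt_nhds hs] with y hy
      rw [hGH y, abs_of_pos hy]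
    rw [abs_of_pos hs]
    exact (hH s).congr_of_eventuallyEq heq

lemma aux_g_deriv (σ : ℝ → ℝ) (hσ : ContDiff ℝ 1 σ) :
    ∀ s : ℝ, HasDerivAt (fun s => s * σ |s|) (σ |s| + |s| * deriv σ |s|) s := by
  intro s
  have hσd : ∀ y : ℝ, HasDerivAt σ (deriv σ y) y := fun y =>
    ((hσ.differentiable one_ne_zero) y).hasDerivAt
  rcases lt_trichotomy s 0 with hs | hs | hs
  · have hd : HasDerivAt (fun y : ℝ => y * σ (-y)) (σ (-s) + (-s) * deriv σ (-s)) s := by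
      have h1 : HasDerivAt (fun y : ℝ => σ (-y)) (deriv σ (-s) * (-1)) s :=
        (hσd (-s)).comp s (hasDerivAt_neg s)
      have := (hasDerivAt_id s).mul h1
      exact this.congr_deriv (by simp only [id]; ring)
    have heq : (fun s : ℝ => s * σ |s|) =ᶠ[𝓝 s] fun y => y * σ (-y) := by
      filter_upwards [eventually_lt_nhds hs] with y hy
      rw [abs_of_neg hy]
    rw [abs_of_neg hs]
    exact hd.congr_of_eventuallyEq heq
  · subst hs
    rw [hasDerivAt_iff_tendsto_slope]
    have h1 : Tendsto (fun y : ℝ => σ |y|) (𝓝[≠] 0) (𝓝 (σ 0)) :=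
      (((hσ.continuous.comp continuous_abs).tendsto 0).mono_left
        nhdsWithin_le_nhds).congr (fun y => rfl) |>.mono_right (by simp)
    have h2 : (fun y : ℝ => σ |y|) =ᶠ[𝓝[≠] (0:ℝ)] slope (fun s : ℝ => s * σ |s|) 0 := by
      filter_upwards [self_mem_nhdsWithin] with y hy
      have hy' : y ≠ 0 := hy
      simp [slope, hy']
    simpa [abs_zero] using h1.congr' h2
  · have hd : HasDerivAt (fun y : ℝ => y * σ y) (σ s + s * deriv σ s) s := by
      have := (hasDerivAt_id s).mul (hσd s)
      exact this.congr_deriv (by simp only [id]; ring)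
    have heq : (fun s : ℝ => s * σ |s|) =ᶠ[𝓝 s] fun y => y * σ y := by
      filter_upwards [eventually_gt_nhds hs] with y hy
      rw [abs_of_pos hy]
    rw [abs_of_pos hs]
    exact hd.congr_of_eventuallyEq heq

/-- The integral solution `u(r,t) = (1/(2cr)) ∫₀ᵗ f(t−τ)(G(r+cτ) − G(r−cτ)) dτ`, with
`G(s) = ∫_{+∞}^{|s|} s' σ(s') ds'` for a compactly supported `C¹` profile `σ`, satisfies
the forced radial wave equation with forcing `σ(r) f(t)` and zero initial conditions. -/
theorem stmt_3 (c : ℝ) (hc : 0 < c) (σ : ℝ → ℝ) (hσ : ContDiff ℝ 1 σ)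
    (hσsupp : HasCompactSupport σ)
    (f : ℝ → ℝ) (hf : ContDiff ℝ 1 f)
    (G : ℝ → ℝ) (hG : ∀ s : ℝ, G s = - ∫ x in Ioi |s|, x * σ x)
    (u : ℝ → ℝ → ℝ)
    (hu : ∀ r t, u r t
      = (1 / (2 * c * r)) * ∫ τ in (0:ℝ)..t, f (t - τ) * (G (r + c * τ) - G (r - c * τ))) :
    (∀ r : ℝ, 0 < r → ∀ t : ℝ, 0 < t →
      deriv (deriv (fun t' => u r t')) t
        = c ^ 2 * (r ^ 2)⁻¹ * deriv (fun r' => r' ^ 2 * deriv (fun r'' => u r'' t) r') r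
          + σ r * f t) ∧
    (∀ r : ℝ, 0 < r → u r 0 = 0) ∧
    (∀ r : ℝ, 0 < r → deriv (fun t => u r t) 0 = 0) := by
  have hcne : c ≠ 0 := hc.ne'
  have hfc : Continuous f := hf.continuous
  set g : ℝ → ℝ := fun s => s * σ |s| with hgdef
  set g₂ : ℝ → ℝ := fun s => σ |s| + |s| * deriv σ |s| with hg2def
  have hGd : ∀ s, HasDerivAt G (g s) s := aux_G_deriv σ hσ hσsupp G hG
  have hgd : ∀ s, HasDerivAt g (g₂ s) s := aux_g_deriv σ hσ
  have hGc : Continuous G := continuous_iff_continuousAt.2 fun x => (hGd x).continuousAt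
  have hgc : Continuous g := continuous_id.mul (hσ.continuous.comp continuous_abs)
  have hg2c : Continuous g₂ := (hσ.continuous.comp continuous_abs).add
    (continuous_abs.mul ((hσ.continuous_deriv le_rfl).comp continuous_abs))
  set w : ℝ → ℝ → ℝ :=
    fun r t => ∫ τ in (0:ℝ)..t, f τ * (G (r + c*(t-τ)) - G (r - c*(t-τ))) with hwdef
  have hu' : ∀ r t, u r t = (1/(2*c*r)) * w r t := by
    intro r t
    rw [hu r t, hwdef]
    congr 1
    have h := intervalIntegral.integral_comp_sub_left (a := 0) (b := t)
      (fun x => f x * (G (r + c*(t-x)) - G (r - c*(t-x)))) t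
    simp only [sub_sub_cancel, sub_self, sub_zero] at h
    exact h
  have hT1 : ∀ r' t₀, HasDerivAt (fun s => w r' s)
      (∫ τ in (0:ℝ)..t₀, f τ * (c * (g (r' + c*(t₀-τ)) + g (r' - c*(t₀-τ))))) t₀ := by
    intro r' t₀
    have hPd : ∀ x τ : ℝ, HasDerivAt (fun y => f τ * (G (r' + c*(y-τ)) - G (r' - c*(y-τ))))
        (f τ * (c * (g (r' + c*(x-τ)) + g (r' - c*(x-τ))))) x := by
      intro x τ
      have b1 : HasDerivAt (fun y : ℝ => r' + c*(y-τ)) c x := by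
        simpa using (((hasDerivAt_id x).sub_const τ).const_mul c).const_add r'
      have b2 : HasDerivAt (fun y : ℝ => r' - c*(y-τ)) (-c) x := by
        simpa using (((hasDerivAt_id x).sub_const τ).const_mul c).const_sub r'
      have h1 := (hGd (r' + c*(x-τ))).comp x b1
      have h2 := (hGd (r' - c*(x-τ))).comp x b2
      have h3 := (h1.sub h2).const_mul (f τ)
      exact h3.congr_deriv (by ring)
    have h := aux_leib (fun t τ => f τ * (G (r' + c*(t-τ)) - G (r' - c*(t-τ))))
      (fun t τ => f τ * (c * (g (r' + c*(t-τ)) + g (r' - c*(t-τ))))) t₀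
      (by fun_prop) (by fun_prop) hPd
    rw [hwdef]
    convert h using 1
    simp
  refine ⟨?_, ?_, ?_⟩
  · intro r hr t ht
    have hrne : r ≠ 0 := hr.ne'
    -- radial derivatives
    have hWr : ∀ x : ℝ, HasDerivAt (fun r' => w r' t)
        (∫ τ in (0:ℝ)..t, f τ * (g (x + c*(t-τ)) - g (x - c*(t-τ)))) x := by
      intro x
      have hPd : ∀ x τ : ℝ, HasDerivAt (fun y => f τ * (G (y + c*(t-τ)) - G (y - c*(t-τ))))
          (f τ * (g (x + c*(t-τ)) - g (x - c*(t-τ)))) x := by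
        intro x τ
        have b1 : HasDerivAt (fun y : ℝ => y + c*(t-τ)) 1 x := (hasDerivAt_id x).add_const _
        have b2 : HasDerivAt (fun y : ℝ => y - c*(t-τ)) 1 x := (hasDerivAt_id x).sub_const _
        have h1 := (hGd (x + c*(t-τ))).comp x b1
        have h2 := (hGd (x - c*(t-τ))).comp x b2
        have h3 := (h1.sub h2).const_mul (f τ)
        exact h3.congr_deriv (by ring)
      have h := aux_param_deriv (fun x τ => f τ * (G (x + c*(t-τ)) - G (x - c*(t-τ))))
        (fun x τ => f τ * (g (x + c*(t-τ)) - g (x - c*(t-τ)))) 0 t x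
        (by fun_prop) (by fun_prop) hPd
      rw [hwdef]
      exact h
    set W₁ : ℝ → ℝ := fun x => ∫ τ in (0:ℝ)..t, f τ * (g (x + c*(t-τ)) - g (x - c*(t-τ)))
      with hW1def
    set Jr : ℝ := ∫ τ in (0:ℝ)..t, f τ * (g₂ (r + c*(t-τ)) - g₂ (r - c*(t-τ))) with hJdef
    have hWrr : HasDerivAt W₁ Jr r := by
      have hPd : ∀ x τ : ℝ, HasDerivAt (fun y => f τ * (g (y + c*(t-τ)) - g (y - c*(t-τ))))
          (f τ * (g₂ (x + c*(t-τ)) - g₂ (x - c*(t-τ)))) x := by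
        intro x τ
        have b1 : HasDerivAt (fun y : ℝ => y + c*(t-τ)) 1 x := (hasDerivAt_id x).add_const _
        have b2 : HasDerivAt (fun y : ℝ => y - c*(t-τ)) 1 x := (hasDerivAt_id x).sub_const _
        have h1 := (hgd (x + c*(t-τ))).comp x b1
        have h2 := (hgd (x - c*(t-τ))).comp x b2
        have h3 := (h1.sub h2).const_mul (f τ)
        exact h3.congr_deriv (by ring)
      have h := aux_param_deriv (fun x τ => f τ * (g (x + c*(t-τ)) - g (x - c*(t-τ))))
        (fun x τ => f τ * (g₂ (x + c*(t-τ)) - g₂ (x - c*(t-τ)))) 0 t r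
        (by fun_prop) (by fun_prop) hPd
      rw [hW1def, hJdef]
      exact h
    -- time derivatives
    have hfunt : (fun t' => u r t') = fun t' => (1/(2*c*r)) * w r t' := funext fun t' => hu' r t'
    have hderiv1 : deriv (fun t' => (1/(2*c*r)) * w r t') = fun t' =>
        (1/(2*c*r)) * ∫ τ in (0:ℝ)..t', f τ * (c * (g (r + c*(t'-τ)) + g (r - c*(t'-τ)))) :=
      funext fun t' => ((hT1 r t').const_mul _).deriv
    have hT2 : HasDerivAt
        (fun t' => ∫ τ in (0:ℝ)..t', f τ * (c * (g (r + c*(t'-τ)) + g (r - c*(t'-τ)))))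
        ((∫ τ in (0:ℝ)..t, c^2 * (f τ * (g₂ (r + c*(t-τ)) - g₂ (r - c*(t-τ)))))
          + f t * (c * (g r + g r))) t := by
      have hPd : ∀ x τ : ℝ, HasDerivAt
          (fun y => f τ * (c * (g (r + c*(y-τ)) + g (r - c*(y-τ)))))
          (c^2 * (f τ * (g₂ (r + c*(x-τ)) - g₂ (r - c*(x-τ))))) x := by
        intro x τ
        have b1 : HasDerivAt (fun y : ℝ => r + c*(y-τ)) c x := by
          simpa using (((hasDerivAt_id x).sub_const τ).const_mul c).const_add r
        have b2 : HasDerivAt (fun y : ℝ => r - c*(y-τ)) (-c) x := by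
          simpa using (((hasDerivAt_id x).sub_const τ).const_mul c).const_sub r
        have h1 := (hgd (r + c*(x-τ))).comp x b1
        have h2 := (hgd (r - c*(x-τ))).comp x b2
        have h3 := ((h1.add h2).const_mul c).const_mul (f τ)
        exact h3.congr_deriv (by ring)
      have h := aux_leib (fun y τ => f τ * (c * (g (r + c*(y-τ)) + g (r - c*(y-τ)))))
        (fun y τ => c^2 * (f τ * (g₂ (r + c*(y-τ)) - g₂ (r - c*(y-τ))))) t
        (by fun_prop) (by fun_prop) hPd
      convert h using 2
      simp
    have hLHS : deriv (deriv (fun t' => u r t')) t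
        = (1/(2*c*r)) * ((∫ τ in (0:ℝ)..t, c^2 * (f τ * (g₂ (r + c*(t-τ)) - g₂ (r - c*(t-τ)))))
          + f t * (c * (g r + g r))) := by
      rw [hfunt, hderiv1]
      exact (hT2.const_mul _).deriv
    -- RHS computation
    have hinv : ∀ x : ℝ, x ≠ 0 → HasDerivAt (fun y => 1/(2*c*y)) (-(2*c)/(2*c*x)^2) x := by
      intro x hx
      have h2cx : 2*c*x ≠ 0 := mul_ne_zero (mul_ne_zero two_ne_zero hcne) hx
      have h := ((hasDerivAt_id x).const_mul (2*c)).inv (by simpa using h2cx)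
      exact (h.congr_of_eventuallyEq (.of_forall fun y => by simp [one_div])).congr_deriv (by simp)
    have hUd : ∀ x : ℝ, x ≠ 0 → HasDerivAt (fun r'' => u r'' t)
        ((-(2*c)/(2*c*x)^2) * w x t + (1/(2*c*x)) * W₁ x) x := by
      intro x hx
      have heq : (fun r'' => u r'' t) = fun y => (1/(2*c*y)) * w y t := funext fun y => hu' y t
      rw [heq]
      exact (hinv x hx).mul (hWr x)
    have heq2 : (fun r' => r' ^ 2 * deriv (fun r'' => u r'' t) r')
        =ᶠ[𝓝 r] fun r' => (2*c)⁻¹ * (r' * W₁ r' - w r' t) := by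
      filter_upwards [eventually_ne_nhds hr.ne'] with x hx
      rw [(hUd x hx).deriv]
      have h2cx : 2*c*x ≠ 0 := mul_ne_zero (mul_ne_zero two_ne_zero hcne) hx
      field_simp
      ring
    have hrd : HasDerivAt (fun r' => (2*c)⁻¹ * (r' * W₁ r' - w r' t))
        ((2*c)⁻¹ * ((1 * W₁ r + r * Jr) - W₁ r)) r :=
      (((hasDerivAt_id r).mul hWrr).sub (hWr r)).const_mul _
    have hRHS : deriv (fun r' => r' ^ 2 * deriv (fun r'' => u r'' t) r') r
        = (2*c)⁻¹ * ((1 * W₁ r + r * Jr) - W₁ r) := heq2.deriv_eq.trans hrd.deriv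
    rw [hLHS, hRHS]
    have hBint : (∫ τ in (0:ℝ)..t, c^2 * (f τ * (g₂ (r + c*(t-τ)) - g₂ (r - c*(t-τ)))))
        = c^2 * Jr := by
      rw [hJdef]
      exact intervalIntegral.integral_const_mul _ _
    have hgr : g r = r * σ r := by rw [hgdef]; simp [abs_of_pos hr]
    rw [hBint, hgr]
    field_simp
    ring
  · intro r hr
    rw [hu' r 0, hwdef]
    simp
  · intro r hr
    have h := hT1 r 0
    simp only [intervalIntegral.integral_same] at h
    have hfun : (fun t => u r t) = fun t => (1/(2*c*r)) * w r t := funext fun t => hu' r t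
    rw [hfun]
    rw [(h.const_mul (1/(2*c*r))).deriv]
    simp
end

section
/- Let c > 0, ω > 0, R > 0, and let G : ℝ → ℝ be a continuous even function with G(s) = 0 for all |s| ≥ R. Then for every r > R and every t with c t > r + R, the integral solution satisfies the exact identity (1/(2 c r)) ∫₀ᵗ sin(ω (t − τ)) ( G(r + c τ) − G(r − c τ) ) dτ = ( −1/(2 c²) ) · (1/r) · sin( ω (t − r/c) ) · ∫_{−R}^{R} cos( (ω/c) s ) G(s) ds. In particular, in this quasi-steady region the solution is a pure outgoing periodic oscillation with amplitude (1/(2c² r)) |∫_{−R}^{R} cos((ω/c) s) G(s) ds|. -/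
open Real Set MeasureTheory

/-- Quasi-steady periodic oscillation: for a continuous even `G` vanishing outside
`[−R, R]`, for `r > R` and `ct > r + R`, the integral solution equals a pure outgoing
periodic oscillation. -/
theorem stmt_5 (c ω R : ℝ) (hc : 0 < c) (hω : 0 < ω) (hR : 0 < R)
    (G : ℝ → ℝ) (hGcont : Continuous G) (hGeven : ∀ s : ℝ, G (-s) = G s)
    (hGsupp : ∀ s : ℝ, R ≤ |s| → G s = 0) :
    ∀ r : ℝ, R < r → ∀ t : ℝ, r + R < c * t →
      (1 / (2 * c * r)) *
          (∫ τ in (0:ℝ)..t, Real.sin (ω * (t - τ)) * (G (r + c * τ) - G (r - c * τ)))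
        = (-1 / (2 * c ^ 2)) * (1 / r) * Real.sin (ω * (t - r / c)) *
            ∫ s in (-R)..R, Real.cos ((ω / c) * s) * G s := by
  intro r hr t ht
  have hc' : c ≠ 0 := hc.ne'
  have ht0 : 0 < t := by nlinarith
  set F : ℝ → ℝ := fun s => Real.sin (ω * (t - (r - s) / c)) * G s with hF
  have hFcont : Continuous F := by
    apply Continuous.mul _ hGcont
    exact Real.continuous_sin.comp (by continuity)
  -- Step 1: rewrite integrand
  have h1 : (∫ τ in (0:ℝ)..t, Real.sin (ω * (t - τ)) * (G (r + c * τ) - G (r - c * τ)))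
      = -∫ τ in (0:ℝ)..t, F (r - c * τ) := by
    rw [← intervalIntegral.integral_neg]
    apply intervalIntegral.integral_congr
    intro τ hτ
    rw [uIcc_of_le ht0.le] at hτ
    have hτ0 : 0 ≤ τ := hτ.1
    have h0 : G (r + c * τ) = 0 := by
      apply hGsupp
      rw [abs_of_pos (by nlinarith)]
      nlinarith
    have harg : t - (r - (r - c * τ)) / c = t - τ := by field_simp; ring
    simp only [hF, harg, h0]
    ring
  -- Step 2: substitution
  have h2 : (∫ τ in (0:ℝ)..t, F (r - c * τ)) = c⁻¹ * ∫ s in (r - c * t)..r, F s := by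
    rw [intervalIntegral.integral_comp_sub_mul F hc' r]
    simp [smul_eq_mul]
  -- Step 3: shrink interval to [-R, R]
  have hlt1 : r - c * t < -R := by nlinarith
  have hRr : R < r := hr
  have hint : ∀ a b : ℝ, IntervalIntegrable F volume a b :=
    fun a b => hFcont.intervalIntegrable a b
  have hzero1 : (∫ s in (r - c * t)..(-R), F s) = 0 := by
    rw [← intervalIntegral.integral_zero (a := r - c * t) (b := (-R)) (E := ℝ)]
    apply intervalIntegral.integral_congr
    intro s hs
    rw [uIcc_of_le hlt1.le] at hs
    have : G s = 0 := by
      apply hGsupp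
      rw [abs_of_nonpos (by nlinarith [hs.2])]
      linarith [hs.2]
    simp [hF, this]
  have hzero2 : (∫ s in R..r, F s) = 0 := by
    rw [← intervalIntegral.integral_zero (a := R) (b := r) (E := ℝ)]
    apply intervalIntegral.integral_congr
    intro s hs
    rw [uIcc_of_le hRr.le] at hs
    have : G s = 0 := by
      apply hGsupp
      rw [abs_of_pos (by nlinarith [hs.1])]
      exact hs.1
    simp [hF, this]
  have h3 : (∫ s in (r - c * t)..r, F s) = ∫ s in (-R)..R, F s := by
    have e1 := intervalIntegral.integral_add_adjacent_intervals
      (hint (r - c * t) (-R)) (hint (-R) r)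
    have e2 := intervalIntegral.integral_add_adjacent_intervals
      (hint (-R) R) (hint R r)
    rw [← e1, hzero1, zero_add, ← e2, hzero2, add_zero]
  -- Step 4: expand sin and kill the odd part
  have hodd : (∫ s in (-R)..R, Real.sin ((ω / c) * s) * G s) = 0 := by
    have hcomp : (∫ s in (-R)..R, Real.sin ((ω / c) * (-s)) * G (-s))
        = ∫ s in (-R)..R, Real.sin ((ω / c) * s) * G s := by
      have := intervalIntegral.integral_comp_neg (a := -R) (b := R)
        (f := fun x => Real.sin ((ω / c) * x) * G x)
      simpa using this
    have heq : (∫ s in (-R)..R, Real.sin ((ω / c) * (-s)) * G (-s))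
        = -∫ s in (-R)..R, Real.sin ((ω / c) * s) * G s := by
      rw [← intervalIntegral.integral_neg]
      apply intervalIntegral.integral_congr
      intro s _
      simp only [mul_neg, Real.sin_neg, hGeven]
      ring
    linarith [hcomp, heq.symm.trans hcomp]
  have h4 : (∫ s in (-R)..R, F s)
      = Real.sin (ω * (t - r / c)) * ∫ s in (-R)..R, Real.cos ((ω / c) * s) * G s := by
    have hexp : ∀ s : ℝ, F s
        = Real.sin (ω * (t - r / c)) * (Real.cos ((ω / c) * s) * G s)
          + Real.cos (ω * (t - r / c)) * (Real.sin ((ω / c) * s) * G s) := by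
      intro s
      have harg : ω * (t - (r - s) / c) = ω * (t - r / c) + (ω / c) * s := by
        field_simp; ring
      simp only [hF, harg, Real.sin_add]
      ring
    simp only [hexp]
    rw [intervalIntegral.integral_add, intervalIntegral.integral_const_mul,
      intervalIntegral.integral_const_mul, hodd]
    · ring
    · exact Continuous.intervalIntegrable (by fun_prop) _ _
    · exact Continuous.intervalIntegrable (by fun_prop) _ _
  rw [h1, h2, h3, h4]
  field_simp
end

section
/- Let c > 0, ω > 0, d > 0, and define G : ℝ → ℝ by G(s) = ( −1/(π² d) ) ( 1 + cos( π s / d ) ) for |s| ≤ d and G(s) = 0 for |s| ≥ d. Then for every r > d and every t with c t > r + d, (1/(2 c r)) ∫₀ᵗ sin(ω (t − τ)) ( G(r + c τ) − G(r − c τ) ) dτ = (1/(π² c²)) ( sinc( ω d/(π c) ) + (1/2) sinc( ω d/(π c) + 1 ) + (1/2) sinc( ω d/(π c) − 1 ) ) · (1/r) · sin( ω (t − r/c) ), where sinc(x) = sin(πx)/(πx) for x ≠ 0 and sinc(0) = 1. -/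
open Real Set MeasureTheory

/-- The normalized sinc function: `sinc x = sin(πx)/(πx)` for `x ≠ 0`, `sinc 0 = 1`. -/
noncomputable def sinc (x : ℝ) : ℝ :=
  if x = 0 then 1 else Real.sin (Real.pi * x) / (Real.pi * x)

lemma integral_sin_linear (α β a b : ℝ) (hβ : β ≠ 0) :
    ∫ τ in a..b, Real.sin (α - β * τ)
      = (Real.cos (α - β * b) - Real.cos (α - β * a)) / β := by
  have h := intervalIntegral.integral_comp_mul_add (a := a) (b := b) Real.sin
    (neg_ne_zero.mpr hβ) α
  simp only [integral_sin, smul_eq_mul] at h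
  have h2 : ∀ τ : ℝ, α - β * τ = -β * τ + α := fun τ => by ring
  simp_rw [h2]
  rw [h, show -β * b + α = α - β * b by ring, show -β * a + α = α - β * a by ring]
  rw [inv_neg, div_eq_inv_mul]
  ring

lemma sin_mul_one_add_cos (u v : ℝ) :
    Real.sin u * (1 + Real.cos v)
      = Real.sin u + (1/2) * Real.sin (u + v) + (1/2) * Real.sin (u - v) := by
  rw [Real.sin_add, Real.sin_sub]; ring

set_option maxHeartbeats 2000000 in
/-- Case 1 quasi-steady solution: with `G(s) = (−1/(π²d))(1 + cos(πs/d))` on `[−d,d]`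
and `0` outside, for `r > d` and `ct > r + d` the integral solution equals the
outgoing periodic oscillation with the sinc-combination amplitude. -/
theorem stmt_7 (c ω d : ℝ) (hc : 0 < c) (hω : 0 < ω) (hd : 0 < d)
    (G : ℝ → ℝ)
    (hG1 : ∀ s : ℝ, |s| ≤ d →
      G s = (-1 / (Real.pi ^ 2 * d)) * (1 + Real.cos (Real.pi * s / d)))
    (hG2 : ∀ s : ℝ, d ≤ |s| → G s = 0) :
    ∀ r : ℝ, d < r → ∀ t : ℝ, r + d < c * t →
      (1 / (2 * c * r)) *
          (∫ τ in (0:ℝ)..t, Real.sin (ω * (t - τ)) * (G (r + c * τ) - G (r - c * τ)))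
        = (1 / (Real.pi ^ 2 * c ^ 2)) *
            (_root_.sinc (ω * d / (Real.pi * c)) + (1 / 2) * _root_.sinc (ω * d / (Real.pi * c) + 1)
              + (1 / 2) * _root_.sinc (ω * d / (Real.pi * c) - 1)) *
            (1 / r) * Real.sin (ω * (t - r / c)) := by
  intro r hr t ht
  have hπ : (0:ℝ) < Real.pi := Real.pi_pos
  have hπ' : Real.pi ≠ 0 := hπ.ne'
  have hc' : c ≠ 0 := hc.ne'
  have hd' : d ≠ 0 := hd.ne'
  have hω' : ω ≠ 0 := hω.ne'
  have hr0 : (0:ℝ) < r := lt_trans hd hr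
  -- the explicit continuous version of G
  set g : ℝ → ℝ := fun s => if |s| ≤ d then
      (-1 / (Real.pi ^ 2 * d)) * (1 + Real.cos (Real.pi * s / d)) else 0 with hg_def
  have hgd : ∀ s : ℝ, |s| = d →
      (-1 / (Real.pi ^ 2 * d)) * (1 + Real.cos (Real.pi * s / d)) = 0 := by
    intro s hs
    rcases (abs_eq hd.le).mp hs with h | h
    · rw [h, show Real.pi * d / d = Real.pi by field_simp, Real.cos_pi]; ring
    · rw [h, show Real.pi * (-d) / d = -Real.pi by field_simp, Real.cos_neg, Real.cos_pi]; ring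
  have hg0 : ∀ s : ℝ, d ≤ |s| → g s = 0 := by
    intro s hs
    by_cases h : |s| ≤ d
    · simp only [hg_def]; rw [if_pos h]; exact hgd s (le_antisymm h hs)
    · simp only [hg_def]; rw [if_neg h]
  have hGg : ∀ s : ℝ, G s = g s := by
    intro s
    by_cases h : |s| ≤ d
    · rw [hG1 s h]; simp only [hg_def]; rw [if_pos h]
    · exact (hG2 s (le_of_not_ge h)).trans (hg0 s (le_of_not_ge h)).symm
  have hgcont : Continuous g := by
    apply Continuous.if_le
    · exact continuous_const.mul (continuous_const.add
        (Real.continuous_cos.comp ((continuous_const.mul continuous_id).div_const d)))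
    · exact continuous_const
    · exact continuous_abs
    · exact continuous_const
    · exact hgd
  set F : ℝ → ℝ := fun τ => Real.sin (ω * (t - τ)) * (g (r + c * τ) - g (r - c * τ)) with hF_def
  have hFcont : Continuous F := by
    apply Continuous.mul
    · exact Real.continuous_sin.comp (continuous_const.mul (continuous_const.sub continuous_id))
    · exact (hgcont.comp (continuous_const.add (continuous_const.mul continuous_id))).sub
        (hgcont.comp (continuous_const.sub (continuous_const.mul continuous_id)))
  have hFint : ∀ u v : ℝ, IntervalIntegrable F volume u v :=
    fun u v => hFcont.intervalIntegrable u v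
  have hEq : (∫ τ in (0:ℝ)..t, Real.sin (ω * (t - τ)) * (G (r + c * τ) - G (r - c * τ)))
      = ∫ τ in (0:ℝ)..t, F τ := by
    simp only [hGg, hF_def]
  set a := (r - d) / c with ha_def
  set b := (r + d) / c with hb_def
  have ha0 : 0 < a := div_pos (by linarith) hc
  have hab : a < b := by
    rw [ha_def, hb_def, div_lt_div_iff₀ hc hc]
    nlinarith
  have hbt : b < t := by
    rw [hb_def, div_lt_iff₀ hc]; linarith [mul_comm t c]
  have hca : c * a = r - d := by rw [ha_def]; field_simp
  have hcb : c * b = r + d := by rw [hb_def]; field_simp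
  -- split the integral
  have hsplit : (∫ τ in (0:ℝ)..t, F τ)
      = (∫ τ in (0:ℝ)..a, F τ) + (∫ τ in a..b, F τ) + (∫ τ in b..t, F τ) := by
    have h1 := intervalIntegral.integral_add_adjacent_intervals (hFint 0 a) (hFint a t)
    have h2 := intervalIntegral.integral_add_adjacent_intervals (hFint a b) (hFint b t)
    rw [← h1, ← h2]; ring
  have hz1 : (∫ τ in (0:ℝ)..a, F τ) = 0 := by
    have heq : EqOn F (fun _ => (0:ℝ)) (Set.uIcc 0 a) := by
      intro τ hτ
      rw [Set.uIcc_of_le ha0.le] at hτ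
      obtain ⟨h1, h2⟩ := hτ
      have hcτ : 0 ≤ c * τ := mul_nonneg hc.le h1
      have h3 : c * τ ≤ r - d := by
        calc c * τ ≤ c * a := by nlinarith
        _ = r - d := hca
      have e1 : g (r + c * τ) = 0 := hg0 _ (by rw [abs_of_pos (by linarith)]; linarith)
      have e2 : g (r - c * τ) = 0 := hg0 _ (by rw [abs_of_pos (by linarith)]; linarith)
      simp only [hF_def, e1, e2, sub_zero, mul_zero]
    rw [intervalIntegral.integral_congr heq]; simp
  have hz3 : (∫ τ in b..t, F τ) = 0 := by
    have heq : EqOn F (fun _ => (0:ℝ)) (Set.uIcc b t) := by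
      intro τ hτ
      rw [Set.uIcc_of_le hbt.le] at hτ
      obtain ⟨h1, h2⟩ := hτ
      have h3 : r + d ≤ c * τ := by
        calc r + d = c * b := hcb.symm
        _ ≤ c * τ := by nlinarith
      have e1 : g (r + c * τ) = 0 := hg0 _ (by rw [abs_of_pos (by linarith)]; linarith)
      have e2 : g (r - c * τ) = 0 := hg0 _ (le_abs.mpr (Or.inr (by linarith)))
      simp only [hF_def, e1, e2, sub_zero, mul_zero]
    rw [intervalIntegral.integral_congr heq]; simp
  -- the middle integrand in explicit form
  set P : ℝ := ω * t + Real.pi * r / d with hP_def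
  set M : ℝ := ω * t - Real.pi * r / d with hM_def
  set βp : ℝ := ω + Real.pi * c / d with hβp_def
  set βm : ℝ := ω - Real.pi * c / d with hβm_def
  have hβp0 : 0 < βp := by
    rw [hβp_def]; positivity
  have hmid : (∫ τ in a..b, F τ)
      = (1 / (Real.pi ^ 2 * d)) *
        ((∫ τ in a..b, Real.sin (ω * t - ω * τ))
          + (1/2) * (∫ τ in a..b, Real.sin (P - βp * τ))
          + (1/2) * (∫ τ in a..b, Real.sin (M - βm * τ))) := by
    have heq : EqOn F (fun τ => (1 / (Real.pi ^ 2 * d)) *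
        (Real.sin (ω * t - ω * τ) + (1/2) * Real.sin (P - βp * τ)
          + (1/2) * Real.sin (M - βm * τ))) (Set.uIcc a b) := by
      intro τ hτ
      rw [Set.uIcc_of_le hab.le] at hτ
      obtain ⟨h1, h2⟩ := hτ
      have h3 : r - d ≤ c * τ := by
        calc r - d = c * a := hca.symm
        _ ≤ c * τ := by nlinarith
      have h4 : c * τ ≤ r + d := by
        calc c * τ ≤ c * b := by nlinarith
        _ = r + d := hcb
      have e1 : g (r + c * τ) = 0 := hg0 _ (by rw [abs_of_pos (by linarith)]; linarith)
      have e2 : g (r - c * τ)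
          = (-1 / (Real.pi ^ 2 * d)) * (1 + Real.cos (Real.pi * (r - c * τ) / d)) := by
        simp only [hg_def]; rw [if_pos (abs_le.mpr ⟨by linarith, by linarith⟩)]
      have hu : ω * (t - τ) = ω * t - ω * τ := by ring
      have hv1 : (ω * t - ω * τ) + Real.pi * (r - c * τ) / d = P - βp * τ := by
        rw [hP_def, hβp_def]; field_simp; ring
      have hv2 : (ω * t - ω * τ) - Real.pi * (r - c * τ) / d = M - βm * τ := by
        rw [hM_def, hβm_def]; field_simp; ring
      simp only [hF_def, e1, e2, hu]
      rw [show Real.sin (ω * t - ω * τ) *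
          (0 - -1 / (Real.pi ^ 2 * d) * (1 + Real.cos (Real.pi * (r - c * τ) / d)))
          = (1 / (Real.pi ^ 2 * d)) * (Real.sin (ω * t - ω * τ)
            * (1 + Real.cos (Real.pi * (r - c * τ) / d))) by ring,
        sin_mul_one_add_cos, hv1, hv2]
    rw [intervalIntegral.integral_congr heq]
    have i1 : IntervalIntegrable (fun τ => Real.sin (ω * t - ω * τ)) volume a b :=
      (Real.continuous_sin.comp
        (continuous_const.sub (continuous_const.mul continuous_id))).intervalIntegrable a b
    have i2 : IntervalIntegrable (fun τ => (1/2) * Real.sin (P - βp * τ)) volume a b :=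
      (continuous_const.mul (Real.continuous_sin.comp
        (continuous_const.sub (continuous_const.mul continuous_id)))).intervalIntegrable a b
    have i3 : IntervalIntegrable (fun τ => (1/2) * Real.sin (M - βm * τ)) volume a b :=
      (continuous_const.mul (Real.continuous_sin.comp
        (continuous_const.sub (continuous_const.mul continuous_id)))).intervalIntegrable a b
    rw [intervalIntegral.integral_const_mul]
    rw [intervalIntegral.integral_add (i1.add i2) i3, intervalIntegral.integral_add i1 i2,
      intervalIntegral.integral_const_mul, intervalIntegral.integral_const_mul]
  -- notation for final computation
  set A : ℝ := ω * (t - r / c) with hA_def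
  set θ : ℝ := ω * d / c with hθ_def
  have hθ0 : 0 < θ := by rw [hθ_def]; positivity
  -- endpoint simplifications
  have ea0 : ω * t - ω * a = A + θ := by
    rw [ha_def, hA_def, hθ_def]; field_simp; ring
  have eb0 : ω * t - ω * b = A - θ := by
    rw [hb_def, hA_def, hθ_def]; field_simp; ring
  have eap : P - βp * a = A + θ + Real.pi := by
    rw [ha_def, hA_def, hθ_def, hP_def, hβp_def]; field_simp; ring
  have ebp : P - βp * b = A - θ - Real.pi := by
    rw [hb_def, hA_def, hθ_def, hP_def, hβp_def]; field_simp; ring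
  have eam : M - βm * a = A + θ - Real.pi := by
    rw [ha_def, hA_def, hθ_def, hM_def, hβm_def]; field_simp; ring
  have ebm : M - βm * b = A - θ + Real.pi := by
    rw [hb_def, hA_def, hθ_def, hM_def, hβm_def]; field_simp; ring
  -- the first two integrals
  have I0 : (∫ τ in a..b, Real.sin (ω * t - ω * τ))
      = 2 * Real.sin A * Real.sin θ / ω := by
    rw [integral_sin_linear (ω * t) ω a b hω', eb0, ea0, Real.cos_sub, Real.cos_add]; ring
  have Ip : (∫ τ in a..b, Real.sin (P - βp * τ))
      = -(2 * Real.sin A * Real.sin θ) / βp := by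
    rw [integral_sin_linear P βp a b hβp0.ne', ebp, eap,
      show A - θ - Real.pi = (A - θ) - Real.pi by ring,
      show A + θ + Real.pi = (A + θ) + Real.pi by ring,
      Real.cos_sub_pi, Real.cos_add_pi, Real.cos_sub, Real.cos_add]
    ring
  -- sinc values
  set x : ℝ := ω * d / (Real.pi * c) with hx_def
  have hx0 : 0 < x := by rw [hx_def]; positivity
  have hπx : Real.pi * x = θ := by rw [hx_def, hθ_def]; field_simp
  have s1 : _root_.sinc x = Real.sin θ / θ := by
    rw [_root_.sinc, if_neg hx0.ne', hπx]
  have s2 : _root_.sinc (x + 1) = -Real.sin θ / (θ + Real.pi) := by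
    rw [_root_.sinc, if_neg (by positivity), mul_add, mul_one, hπx, Real.sin_add_pi, neg_div]
  rw [hEq, hsplit, hz1, hz3, hmid, zero_add, add_zero]
  by_cases hcase : βm = 0
  · -- resonant case: ω d = π c, x = 1
    have hωd : ω * d = Real.pi * c := by
      have : ω = Real.pi * c / d := by
        have := hcase; rw [hβm_def] at this; linarith [sub_eq_zero.mp this]
      rw [this]; field_simp
    have hθπ : θ = Real.pi := by rw [hθ_def, hωd]; field_simp
    have hsθ : Real.sin θ = 0 := by rw [hθπ, Real.sin_pi]
    have hx1 : x = 1 := by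
      rw [hx_def, div_eq_one_iff_eq (by positivity)]; exact hωd
    have hMA : M = A := by
      rw [hM_def, hA_def]; field_simp; linear_combination r * hωd
    have Im : (∫ τ in a..b, Real.sin (M - βm * τ)) = (b - a) * Real.sin A := by
      simp only [hcase, zero_mul, sub_zero, hMA]
      rw [intervalIntegral.integral_const, smul_eq_mul]
    rw [I0, Ip, Im, hsθ, hx1]
    have hba : b - a = 2 * d / c := by rw [ha_def, hb_def]; field_simp; ring
    rw [hba]
    have hs1 : _root_.sinc (1:ℝ) = 0 := by
      rw [_root_.sinc, if_neg one_ne_zero, mul_one, Real.sin_pi, zero_div]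
    have hs2 : _root_.sinc (1 + 1 : ℝ) = 0 := by
      rw [_root_.sinc, if_neg (by norm_num),
        show Real.pi * ((1:ℝ) + 1) = 2 * Real.pi by ring, Real.sin_two_pi, zero_div]
    have hs0 : _root_.sinc (1 - 1 : ℝ) = 1 := by norm_num [_root_.sinc]
    rw [hs1, hs2, hs0]
    field_simp
    ring
  · -- non-resonant case
    have hβm' : βm = (ω * d - Real.pi * c) / d := by
      rw [hβm_def]; field_simp
    have hβp' : βp = (ω * d + Real.pi * c) / d := by
      rw [hβp_def]; field_simp
    have hne1 : ω * d + Real.pi * c ≠ 0 := by positivity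
    have hne2 : ω * d - Real.pi * c ≠ 0 := by
      intro h
      exact hcase (by rw [hβm', h, zero_div])
    have hthp : θ + Real.pi = (ω * d + Real.pi * c) / c := by
      rw [hθ_def]; field_simp
    have hthm : θ - Real.pi = (ω * d - Real.pi * c) / c := by
      rw [hθ_def]; field_simp
    have hθπ : θ - Real.pi ≠ 0 := by
      rw [hthm]; exact div_ne_zero hne2 hc'
    have s3 : _root_.sinc (x - 1) = -Real.sin θ * c / (ω * d - Real.pi * c) := by
      have hx1 : x - 1 ≠ 0 := by
        intro h
        apply hθπ
        rw [← hπx, sub_eq_zero.mp h, mul_one, sub_self]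
      rw [_root_.sinc, if_neg hx1, mul_sub, mul_one, hπx, Real.sin_sub_pi, neg_div, hthm,
        div_div_eq_mul_div]
      ring
    have s2' : _root_.sinc (x + 1) = -Real.sin θ * c / (ω * d + Real.pi * c) := by
      rw [s2, hthp, div_div_eq_mul_div]
    have s1' : _root_.sinc x = Real.sin θ * c / (ω * d) := by
      rw [s1, hθ_def, div_div_eq_mul_div]
    have Im : (∫ τ in a..b, Real.sin (M - βm * τ))
        = -(2 * Real.sin A * Real.sin θ) * d / (ω * d - Real.pi * c) := by
      rw [integral_sin_linear M βm a b hcase, ebm, eam,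
        show A - θ + Real.pi = (A - θ) + Real.pi by ring,
        show A + θ - Real.pi = (A + θ) - Real.pi by ring,
        Real.cos_add_pi, Real.cos_sub_pi, Real.cos_sub, Real.cos_add, hβm',
        div_div_eq_mul_div]
      ring
    have Ip' : (∫ τ in a..b, Real.sin (P - βp * τ))
        = -(2 * Real.sin A * Real.sin θ) * d / (ω * d + Real.pi * c) := by
      rw [Ip, hβp', div_div_eq_mul_div]
    rw [I0, Ip', Im, s1', s2', s3]
    field_simp
end

section
/- Let c > 0, ω > 0, λ = 2πc/ω, let k be a positive integer, and set d = λ (k+1)/2. Define G : ℝ → ℝ by G(s) = ( −1/(π² d) ) ( 1 + cos( π s / d ) ) for |s| ≤ d and G(s) = 0 for |s| ≥ d. Then for every r > d and every t with c t > r + d, (1/(2 c r)) ∫₀ᵗ sin(ω (t − τ)) ( G(r + c τ) − G(r − c τ) ) dτ = 0. That is, the Case-1 acoustic source with forcing radius d = λ(k+1)/2 masks itself: the wave field vanishes identically outside its forcing core in the quasi-steady region. -/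
open Real Set MeasureTheory

/-- Antiderivative building block: `cos (u - p τ) / p` has derivative `sin (u - p τ)`. -/
lemma stmt_8_aux (u p : ℝ) (hp : p ≠ 0) (x : ℝ) :
    HasDerivAt (fun τ => Real.cos (u - p * τ) / p) (Real.sin (u - p * x)) x := by
  have h0 : HasDerivAt (fun τ : ℝ => u - p * τ) (-p) x := by
    exact (((hasDerivAt_id x).const_mul p).const_sub u).congr_deriv (by simp)
  have h1 := (h0.cos).div_const p
  exact h1.congr_deriv (by field_simp)

/-- Self-masking in Case 1: with wavelength `λ = 2πc/ω` and forcing radius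
`d = λ(k+1)/2` for a positive integer `k`, the Case-1 wave field vanishes identically
outside the forcing core in the quasi-steady region. -/
theorem stmt_8 (c ω lam : ℝ) (hc : 0 < c) (hω : 0 < ω)
    (hlam : lam = 2 * Real.pi * c / ω)
    (k : ℕ) (hk : 1 ≤ k) (d : ℝ) (hd : d = lam * (k + 1) / 2)
    (G : ℝ → ℝ)
    (hG1 : ∀ s : ℝ, |s| ≤ d →
      G s = (-1 / (Real.pi ^ 2 * d)) * (1 + Real.cos (Real.pi * s / d)))
    (hG2 : ∀ s : ℝ, d ≤ |s| → G s = 0) :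
    ∀ r : ℝ, d < r → ∀ t : ℝ, r + d < c * t →
      (1 / (2 * c * r)) *
          (∫ τ in (0:ℝ)..t, Real.sin (ω * (t - τ)) * (G (r + c * τ) - G (r - c * τ)))
        = 0 := by
  intro r hr t ht
  have hπ := Real.pi_pos
  have hd0 : 0 < d := by rw [hd, hlam]; positivity
  have hdne : d ≠ 0 := ne_of_gt hd0
  have hωne : ω ≠ 0 := ne_of_gt hω
  have hcne : c ≠ 0 := ne_of_gt hc
  have hωd : ω * d = Real.pi * c * (k + 1) := by
    rw [hd, hlam]; field_simp
  -- continuity of G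
  have hGcont : Continuous G := by
    have hGeq : G = fun s => if |s| ≤ d then
        (-1 / (Real.pi ^ 2 * d)) * (1 + Real.cos (Real.pi * s / d)) else 0 := by
      funext s
      by_cases h : |s| ≤ d
      · rw [if_pos h, hG1 s h]
      · rw [if_neg h, hG2 s (le_of_lt (not_le.mp h))]
    rw [hGeq]
    apply Continuous.if_le (by fun_prop) continuous_const continuous_abs continuous_const
    intro s hs
    rcases (abs_eq hd0.le).mp hs with h1 | h1 <;> rw [h1]
    · have h2 : Real.pi * d / d = Real.pi := by field_simp
      rw [h2, Real.cos_pi]; ring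
    · have h2 : Real.pi * (-d) / d = -Real.pi := by field_simp
      rw [h2, Real.cos_neg, Real.cos_pi]; ring
  set f : ℝ → ℝ := fun τ => Real.sin (ω * (t - τ)) * (G (r + c * τ) - G (r - c * τ))
    with hfdef
  have hfc : Continuous f := by
    apply Continuous.mul
    · exact Real.continuous_sin.comp (by fun_prop)
    · exact (hGcont.comp (by fun_prop)).sub (hGcont.comp (by fun_prop))
  set τ₁ := (r - d) / c with hτ₁
  set τ₂ := (r + d) / c with hτ₂
  have hcτ₁ : c * τ₁ = r - d := by rw [hτ₁]; field_simp
  have hcτ₂ : c * τ₂ = r + d := by rw [hτ₂]; field_simp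
  have h0τ₁ : 0 < τ₁ := div_pos (by linarith) hc
  have hτ₁₂ : τ₁ < τ₂ := by
    have h' : c * τ₁ < c * τ₂ := by rw [hcτ₁, hcτ₂]; linarith
    exact lt_of_mul_lt_mul_left h' hc.le
  have hτ₂t : τ₂ < t := by
    have h' : c * τ₂ < c * t := by rw [hcτ₂]; exact ht
    exact lt_of_mul_lt_mul_left h' hc.le
  have hi : ∀ a b : ℝ, IntervalIntegrable f volume a b := fun a b =>
    hfc.intervalIntegrable a b
  have hsplit : (∫ τ in (0:ℝ)..t, f τ)
      = (∫ τ in (0:ℝ)..τ₁, f τ) + ((∫ τ in τ₁..τ₂, f τ) + (∫ τ in τ₂..t, f τ)) := by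
    rw [intervalIntegral.integral_add_adjacent_intervals (hi τ₁ τ₂) (hi τ₂ t),
        intervalIntegral.integral_add_adjacent_intervals (hi 0 τ₁) (hi τ₁ t)]
  -- first piece vanishes
  have h1 : (∫ τ in (0:ℝ)..τ₁, f τ) = 0 := by
    rw [intervalIntegral.integral_congr (g := fun _ => (0:ℝ)) ?_]
    · simp
    · intro τ hτ
      rw [uIcc_of_le h0τ₁.le] at hτ
      obtain ⟨hτ0, hττ₁⟩ := hτ
      have hc0 : 0 ≤ c * τ := mul_nonneg hc.le hτ0
      have hcu : c * τ ≤ r - d := by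
        calc c * τ ≤ c * τ₁ := mul_le_mul_of_nonneg_left hττ₁ hc.le
        _ = r - d := hcτ₁
      have hA : G (r + c * τ) = 0 :=
        hG2 _ (by rw [abs_of_pos (by linarith)]; linarith)
      have hB : G (r - c * τ) = 0 :=
        hG2 _ (by rw [abs_of_pos (by linarith)]; linarith)
      simp [hfdef, hA, hB]
  -- third piece vanishes
  have h3 : (∫ τ in τ₂..t, f τ) = 0 := by
    rw [intervalIntegral.integral_congr (g := fun _ => (0:ℝ)) ?_]
    · simp
    · intro τ hτ
      rw [uIcc_of_le hτ₂t.le] at hτ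
      obtain ⟨hττ₂, hτt⟩ := hτ
      have hcl : r + d ≤ c * τ := by
        calc r + d = c * τ₂ := hcτ₂.symm
        _ ≤ c * τ := mul_le_mul_of_nonneg_left hττ₂ hc.le
      have hA : G (r + c * τ) = 0 :=
        hG2 _ (by rw [abs_of_pos (by linarith)]; linarith)
      have hB : G (r - c * τ) = 0 :=
        hG2 _ (by rw [abs_of_nonpos (by linarith)]; linarith)
      simp [hfdef, hA, hB]
  -- middle piece
  set p2 := ω + Real.pi * c / d with hp2def
  set p3 := ω - Real.pi * c / d with hp3def
  have hpcd : Real.pi * c / d = ω / (k + 1) := by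
    rw [div_eq_div_iff hdne (by positivity : ((k:ℝ) + 1) ≠ 0)]
    linarith [hωd]
  have hp2 : 0 < p2 := by rw [hp2def]; positivity
  have hp3 : 0 < p3 := by
    rw [hp3def, hpcd]
    have h' : ω / ((k:ℝ) + 1) < ω := by
      apply div_lt_self hω
      have : (1:ℝ) ≤ (k:ℝ) := by exact_mod_cast hk
      linarith
    linarith
  set F : ℝ → ℝ := fun τ => (1 / (Real.pi ^ 2 * d)) *
      (Real.cos (ω * t - ω * τ) / ω +
        (Real.cos ((ω * t + Real.pi * r / d) - p2 * τ) / p2 / 2 +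
          Real.cos ((ω * t - Real.pi * r / d) - p3 * τ) / p3 / 2)) with hFdef
  set g : ℝ → ℝ := fun τ => (1 / (Real.pi ^ 2 * d)) *
      (Real.sin (ω * t - ω * τ) +
        (Real.sin ((ω * t + Real.pi * r / d) - p2 * τ) / 2 +
          Real.sin ((ω * t - Real.pi * r / d) - p3 * τ) / 2)) with hgdef
  have hF : ∀ x : ℝ, HasDerivAt F (g x) x := by
    intro x
    exact ((stmt_8_aux (ω * t) ω hωne x).add
      (((stmt_8_aux (ω * t + Real.pi * r / d) p2 (ne_of_gt hp2) x).div_const 2).add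
        ((stmt_8_aux (ω * t - Real.pi * r / d) p3 (ne_of_gt hp3) x).div_const 2))).const_mul
      (1 / (Real.pi ^ 2 * d))
  have hgc : Continuous g := by rw [hgdef]; fun_prop
  have h2 : (∫ τ in τ₁..τ₂, f τ) = 0 := by
    have heq : EqOn f g (uIcc τ₁ τ₂) := by
      intro τ hτ
      rw [uIcc_of_le hτ₁₂.le] at hτ
      obtain ⟨hl, hu⟩ := hτ
      have hcl : r - d ≤ c * τ := by
        calc r - d = c * τ₁ := hcτ₁.symm
        _ ≤ c * τ := mul_le_mul_of_nonneg_left hl hc.le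
      have hcu : c * τ ≤ r + d := by
        calc c * τ ≤ c * τ₂ := mul_le_mul_of_nonneg_left hu hc.le
        _ = r + d := hcτ₂
      have habs : |r - c * τ| ≤ d := abs_le.mpr ⟨by linarith, by linarith⟩
      have hB := hG1 _ habs
      have hA : G (r + c * τ) = 0 :=
        hG2 _ (by rw [abs_of_pos (by linarith)]; linarith)
      have e2 : (ω * t + Real.pi * r / d) - p2 * τ
          = ω * (t - τ) + Real.pi * (r - c * τ) / d := by
        rw [hp2def]; field_simp; ring
      have e3 : (ω * t - Real.pi * r / d) - p3 * τ
          = ω * (t - τ) - Real.pi * (r - c * τ) / d := by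
        rw [hp3def]; field_simp; ring
      show Real.sin (ω * (t - τ)) * (G (r + c * τ) - G (r - c * τ)) = g τ
      rw [hB, hA, hgdef]
      simp only
      rw [show ω * t - ω * τ = ω * (t - τ) by ring, e2, e3,
        Real.sin_add, Real.sin_sub]
      ring
    rw [intervalIntegral.integral_congr heq,
        intervalIntegral.integral_eq_sub_of_hasDerivAt (fun x _ => hF x)
          (hgc.intervalIntegrable _ _)]
    -- now show F τ₂ - F τ₁ = 0
    have hA12' : c * (ω * τ₂) = c * (ω * τ₁ + 2 * Real.pi * ((k:ℝ) + 1)) := by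
      linear_combination ω * hcτ₂ - ω * hcτ₁ + 2 * hωd
    have hA12 : ω * τ₂ = ω * τ₁ + 2 * Real.pi * ((k:ℝ) + 1) :=
      mul_left_cancel₀ hcne hA12'
    have hB1 : Real.pi * c / d * τ₁ = Real.pi * r / d - Real.pi := by
      rw [div_mul_eq_mul_div, mul_assoc, hcτ₁, mul_sub, sub_div, mul_div_assoc Real.pi d d, div_self hdne, mul_one]
    have hB2 : Real.pi * c / d * τ₂ = Real.pi * r / d + Real.pi := by
      rw [div_mul_eq_mul_div, mul_assoc, hcτ₂, mul_add, add_div, mul_div_assoc Real.pi d d, div_self hdne, mul_one]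
    have ec1 : Real.cos (ω * t - ω * τ₁) = Real.cos (ω * t - ω * τ₂) := by
      have e : ω * t - ω * τ₁ = (ω * t - ω * τ₂) + (((k : ℤ) + 1 : ℤ) : ℝ) * (2 * Real.pi) := by
        push_cast
        linarith [hA12]
      rw [e, Real.cos_add_int_mul_two_pi]
    have ec2 : Real.cos ((ω * t + Real.pi * r / d) - p2 * τ₁)
        = Real.cos ((ω * t + Real.pi * r / d) - p2 * τ₂) := by
      have e : (ω * t + Real.pi * r / d) - p2 * τ₁
          = ((ω * t + Real.pi * r / d) - p2 * τ₂) + (((k : ℤ) + 2 : ℤ) : ℝ) * (2 * Real.pi) := by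
        rw [hp2def]
        push_cast
        linear_combination hA12 + hB2 - hB1
      rw [e, Real.cos_add_int_mul_two_pi]
    have ec3 : Real.cos ((ω * t - Real.pi * r / d) - p3 * τ₁)
        = Real.cos ((ω * t - Real.pi * r / d) - p3 * τ₂) := by
      have e : (ω * t - Real.pi * r / d) - p3 * τ₁
          = ((ω * t - Real.pi * r / d) - p3 * τ₂) + ((k : ℤ) : ℝ) * (2 * Real.pi) := by
        rw [hp3def]
        push_cast
        linear_combination hA12 - hB2 + hB1
      rw [e, Real.cos_add_int_mul_two_pi]
    rw [hFdef]
    simp only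
    rw [ec1, ec2, ec3]
    ring
  rw [hsplit, h1, h2, h3]
  simp
end

section
/- Let c > 0, ω > 0, r₀ > 0, and define G : ℝ → ℝ by G(s) = −r₀ for |s| < r₀ and G(s) = 0 for |s| ≥ r₀. Then for every r > r₀ and every t with c t > r + r₀, (1/(2 c r)) ∫₀ᵗ sin(ω (t − τ)) ( G(r + c τ) − G(r − c τ) ) dτ = ( r₀ / (ω c) ) sin( (ω/c) r₀ ) · (1/r) · sin( ω (t − r/c) ). -/
open Real Set MeasureTheory

/-- Case 4 (thin spherical shell) quasi-steady solution: with `G(s) = −r₀` for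
`|s| < r₀` and `0` for `|s| ≥ r₀`, for `r > r₀` and `ct > r + r₀`, the integral
solution equals `(r₀/(ωc)) sin((ω/c) r₀) (1/r) sin(ω(t − r/c))`. -/
theorem stmt_10 (c ω r₀ : ℝ) (hc : 0 < c) (hω : 0 < ω) (hr₀ : 0 < r₀)
    (G : ℝ → ℝ)
    (hG1 : ∀ s : ℝ, |s| < r₀ → G s = -r₀)
    (hG2 : ∀ s : ℝ, r₀ ≤ |s| → G s = 0) :
    ∀ r : ℝ, r₀ < r → ∀ t : ℝ, r + r₀ < c * t →
      (1 / (2 * c * r)) *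
          (∫ τ in (0:ℝ)..t, Real.sin (ω * (t - τ)) * (G (r + c * τ) - G (r - c * τ)))
        = (r₀ / (ω * c)) * Real.sin ((ω / c) * r₀) * (1 / r)
            * Real.sin (ω * (t - r / c)) := by
  intro r hr t ht
  have hc' : c ≠ 0 := ne_of_gt hc
  set a : ℝ := (r - r₀) / c with ha
  set b : ℝ := (r + r₀) / c with hb
  have h0a : 0 < a := div_pos (by linarith) hc
  have hab : a < b := by
    rw [ha, hb, div_lt_div_iff₀ hc hc]
    nlinarith
  have hbt : b < t := by
    rw [hb, div_lt_iff₀ hc]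
    linarith [mul_comm c t]
  have h0t : (0:ℝ) ≤ t := le_of_lt (h0a.trans (hab.trans hbt))
  -- The integrand equals an indicator function on Ioc 0 t
  set g : ℝ → ℝ := fun τ => r₀ * Real.sin (ω * (t - τ)) with hg
  have key : ∀ τ ∈ Ioc (0:ℝ) t,
      Real.sin (ω * (t - τ)) * (G (r + c * τ) - G (r - c * τ))
        = Set.indicator (Ioo a b) g τ := by
    intro τ hτ
    have hτ0 : 0 < τ := hτ.1
    have hplus : G (r + c * τ) = 0 := by
      apply hG2
      have : r₀ ≤ r + c * τ := by nlinarith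
      rwa [abs_of_pos (by nlinarith)]
    by_cases hmem : τ ∈ Ioo a b
    · have h1 : r - c * τ < r₀ := by
        have := hmem.1
        rw [ha, div_lt_iff₀ hc] at this
        nlinarith [mul_comm τ c]
      have h2 : -r₀ < r - c * τ := by
        have := hmem.2
        rw [hb, lt_div_iff₀ hc] at this
        nlinarith [mul_comm τ c]
      have hminus : G (r - c * τ) = -r₀ := by
        apply hG1
        rw [abs_lt]; exact ⟨h2, h1⟩
      rw [Set.indicator_of_mem hmem, hplus, hminus, hg]
      ring
    · have hminus : G (r - c * τ) = 0 := by
        apply hG2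
        have hcases : τ ≤ a ∨ b ≤ τ := by
          by_contra h'
          push_neg at h'
          exact hmem ⟨h'.1, h'.2⟩
        rcases hcases with h | h
        · rw [ha, le_div_iff₀ hc] at h
          have : r₀ ≤ r - c * τ := by nlinarith [mul_comm τ c]
          rw [abs_of_pos (by linarith)]; linarith
        · rw [hb, div_le_iff₀ hc] at h
          have : r - c * τ ≤ -r₀ := by nlinarith [mul_comm τ c]
          rw [abs_of_neg (by linarith)]; linarith
      rw [Set.indicator_of_notMem hmem, hplus, hminus]
      ring
  have step1 : (∫ τ in (0:ℝ)..t, Real.sin (ω * (t - τ)) * (G (r + c * τ) - G (r - c * τ)))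
      = ∫ τ in a..b, g τ := by
    rw [intervalIntegral.integral_of_le h0t, intervalIntegral.integral_of_le hab.le]
    rw [MeasureTheory.setIntegral_congr_fun measurableSet_Ioc key]
    rw [MeasureTheory.integral_indicator measurableSet_Ioo,
      MeasureTheory.Measure.restrict_restrict measurableSet_Ioo]
    have hsub : Ioo a b ∩ Ioc 0 t = Ioo a b := by
      apply Set.inter_eq_self_of_subset_left
      intro x hx
      exact ⟨h0a.trans hx.1, (hx.2.le).trans hbt.le⟩
    rw [hsub, ← MeasureTheory.integral_Ioc_eq_integral_Ioo]
  -- FTC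
  have step2 : (∫ τ in a..b, g τ)
      = r₀ / ω * Real.cos (ω * (t - b)) - r₀ / ω * Real.cos (ω * (t - a)) := by
    apply intervalIntegral.integral_eq_sub_of_hasDerivAt
      (f := fun x : ℝ => r₀ / ω * Real.cos (ω * (t - x)))
    · intro x _
      have h1 : HasDerivAt (fun τ : ℝ => ω * (t - τ)) (-ω) x := by
        simpa using (((hasDerivAt_id x).const_sub t).const_mul ω)
      have h2 : HasDerivAt (fun τ : ℝ => Real.cos (ω * (t - τ)))
          (-Real.sin (ω * (t - x)) * (-ω)) x :=
        (Real.hasDerivAt_cos _).comp x h1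
      have h3 := h2.const_mul (r₀ / ω)
      convert h3 using 1
      · rfl
      · show r₀ * Real.sin (ω * (t - x)) = _
        rw [div_mul_eq_mul_div, eq_div_iff hω.ne']
        ring
    · apply Continuous.intervalIntegrable
      fun_prop
  rw [step1, step2]
  have harg1 : (ω * (t - b) + ω * (t - a)) / 2 = ω * (t - r / c) := by
    rw [ha, hb]; field_simp; ring
  have harg2 : (ω * (t - b) - ω * (t - a)) / 2 = -((ω / c) * r₀) := by
    rw [ha, hb]; field_simp; ring
  have hcc : Real.cos (ω * (t - b)) - Real.cos (ω * (t - a))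
      = 2 * Real.sin (ω * (t - r / c)) * Real.sin ((ω / c) * r₀) := by
    rw [Real.cos_sub_cos, harg1, harg2, Real.sin_neg]
    ring
  have : r₀ / ω * Real.cos (ω * (t - b)) - r₀ / ω * Real.cos (ω * (t - a))
      = r₀ / ω * (Real.cos (ω * (t - b)) - Real.cos (ω * (t - a))) := by ring
  rw [this, hcc]
  field_simp
end

section
/- Let c > 0, ω > 0, λ = 2πc/ω, let k be a positive integer, and set r₀ = λ k / 2. Define G : ℝ → ℝ by G(s) = −r₀ for |s| < r₀ and G(s) = 0 for |s| ≥ r₀. Then for every r > r₀ and every t with c t > r + r₀, (1/(2 c r)) ∫₀ᵗ sin(ω (t − τ)) ( G(r + c τ) − G(r − c τ) ) dτ = 0. That is, a thin spherical shell of sinusoidal forcing whose radius is an integer multiple of half the wavelength masks itself: the wave field vanishes identically outside the shell in the quasi-steady region. -/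
open Real Set MeasureTheory

/-- Self-masking in Case 4: a thin spherical shell of sinusoidal forcing whose radius
`r₀ = λk/2` is an integer multiple of half the wavelength `λ = 2πc/ω` produces a wave
field that vanishes identically outside the shell in the quasi-steady region. -/
theorem stmt_11 (c ω lam : ℝ) (hc : 0 < c) (hω : 0 < ω)
    (hlam : lam = 2 * Real.pi * c / ω)
    (k : ℕ) (hk : 1 ≤ k) (r₀ : ℝ) (hr₀ : r₀ = lam * k / 2)
    (G : ℝ → ℝ)
    (hG1 : ∀ s : ℝ, |s| < r₀ → G s = -r₀)
    (hG2 : ∀ s : ℝ, r₀ ≤ |s| → G s = 0) :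
    ∀ r : ℝ, r₀ < r → ∀ t : ℝ, r + r₀ < c * t →
      (1 / (2 * c * r)) *
          (∫ τ in (0:ℝ)..t, Real.sin (ω * (t - τ)) * (G (r + c * τ) - G (r - c * τ)))
        = 0 := by
  intro r hr t ht
  have hk1 : (1:ℝ) ≤ (k:ℝ) := by exact_mod_cast hk
  have hlampos : 0 < lam := by
    rw [hlam]; positivity
  have hr₀pos : 0 < r₀ := by
    rw [hr₀]; nlinarith
  set a := (r - r₀) / c with ha
  set b := (r + r₀) / c with hb
  have h0a : 0 < a := div_pos (by linarith) hc
  have hab : a < b := by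
    apply div_lt_div_of_pos_right (by linarith) hc
  have hbt : b < t := by
    rw [hb, div_lt_iff₀ hc]; linarith [mul_comm c t]
  set f : ℝ → ℝ := fun τ => Real.sin (ω * (t - τ)) * (G (r + c * τ) - G (r - c * τ)) with hf
  -- f vanishes on [0, a]
  have hzero1 : ∀ τ ∈ Icc (0:ℝ) a, f τ = 0 := by
    intro τ hτ
    have h1 : G (r + c * τ) = 0 := by
      apply hG2
      rw [abs_of_nonneg (by nlinarith [hτ.1] : (0:ℝ) ≤ r + c * τ)]
      nlinarith [hτ.1]
    have hca : c * τ ≤ r - r₀ := by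
      have := hτ.2
      rw [ha, le_div_iff₀ hc] at this
      linarith [mul_comm τ c]
    have h2 : G (r - c * τ) = 0 := by
      apply hG2
      rw [abs_of_nonneg (by linarith : (0:ℝ) ≤ r - c * τ)]
      linarith
    simp [hf, h1, h2]
  -- f vanishes on [b, t]
  have hzero2 : ∀ τ ∈ Icc b t, f τ = 0 := by
    intro τ hτ
    have hcb : r + r₀ ≤ c * τ := by
      have := hτ.1
      rw [hb, div_le_iff₀ hc] at this
      linarith [mul_comm τ c]
    have h1 : G (r + c * τ) = 0 := by
      apply hG2
      rw [abs_of_nonneg (by nlinarith : (0:ℝ) ≤ r + c * τ)]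
      nlinarith
    have h2 : G (r - c * τ) = 0 := by
      apply hG2
      rw [abs_of_nonpos (by linarith : r - c * τ ≤ 0)]
      linarith
    simp [hf, h1, h2]
  -- f equals sin * r₀ on (a, b)
  have hmid : ∀ τ ∈ Ioo a b, f τ = Real.sin (ω * (t - τ)) * r₀ := by
    intro τ hτ
    have h1lt : r - r₀ < c * τ := by
      have := hτ.1
      rw [ha, div_lt_iff₀ hc] at this
      linarith [mul_comm τ c]
    have h2lt : c * τ < r + r₀ := by
      have := hτ.2
      rw [hb, lt_div_iff₀ hc] at this
      linarith [mul_comm τ c]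
    have h1 : G (r + c * τ) = 0 := by
      apply hG2
      rw [abs_of_nonneg (by nlinarith : (0:ℝ) ≤ r + c * τ)]
      nlinarith
    have h2 : G (r - c * τ) = -r₀ := by
      apply hG1
      rw [abs_lt]; constructor <;> linarith
    simp [hf, h1, h2]
  -- Integrability pieces
  have hne_b : ∀ᵐ x : ℝ, x ≠ b := by
    have : (volume : Measure ℝ) {b} = 0 := measure_singleton b
    rw [ae_iff]
    simpa using this
  have hint1 : IntervalIntegrable f volume 0 a := by
    apply (intervalIntegrable_const (c := (0:ℝ))).congr_ae
    apply (ae_restrict_iff' measurableSet_uIoc).2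
    filter_upwards with x hx
    rw [uIoc_of_le h0a.le] at hx
    exact (hzero1 x ⟨hx.1.le, hx.2⟩).symm
  have hcont : Continuous fun τ : ℝ => Real.sin (ω * (t - τ)) * r₀ :=
    (Real.continuous_sin.comp (continuous_const.mul (continuous_const.sub continuous_id))).mul
      continuous_const
  have hint2 : IntervalIntegrable f volume a b := by
    apply (hcont.intervalIntegrable a b).congr_ae
    apply (ae_restrict_iff' measurableSet_uIoc).2
    filter_upwards [hne_b] with x hx hmem
    rw [uIoc_of_le hab.le] at hmem
    exact (hmid x ⟨hmem.1, lt_of_le_of_ne hmem.2 hx⟩).symm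
  have hint3 : IntervalIntegrable f volume b t := by
    apply (intervalIntegrable_const (c := (0:ℝ))).congr_ae
    apply (ae_restrict_iff' measurableSet_uIoc).2
    filter_upwards with x hx
    rw [uIoc_of_le hbt.le] at hx
    exact (hzero2 x ⟨hx.1.le, hx.2⟩).symm
  -- the middle integral
  have hmidint : (∫ τ in a..b, f τ) = ∫ τ in a..b, Real.sin (ω * (t - τ)) * r₀ := by
    apply intervalIntegral.integral_congr_ae
    filter_upwards [hne_b] with x hx hmem
    rw [uIoc_of_le hab.le] at hmem
    exact hmid x ⟨hmem.1, lt_of_le_of_ne hmem.2 hx⟩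
  have hω' : ω ≠ 0 := ne_of_gt hω
  have hderiv : ∀ τ ∈ uIcc a b,
      HasDerivAt (fun τ => r₀ / ω * Real.cos (ω * (t - τ)))
        (Real.sin (ω * (t - τ)) * r₀) τ := by
    intro τ _
    have h1 : HasDerivAt (fun τ : ℝ => ω * (t - τ)) (-ω) τ := by
      exact (((hasDerivAt_id' τ).const_sub t).const_mul ω).congr_deriv (by ring)
    have h2 := (Real.hasDerivAt_cos (ω * (t - τ))).comp τ h1
    have h3 := h2.const_mul (r₀ / ω)
    refine h3.congr_deriv ?_
    have hcancel : r₀ / ω * ω = r₀ := div_mul_cancel₀ r₀ hω'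
    linear_combination (Real.sin (ω * (t - τ))) * hcancel
  have hval : (∫ τ in a..b, Real.sin (ω * (t - τ)) * r₀)
      = r₀ / ω * Real.cos (ω * (t - b)) - r₀ / ω * Real.cos (ω * (t - a)) :=
    intervalIntegral.integral_eq_sub_of_hasDerivAt hderiv (hcont.intervalIntegrable a b)
  have hkey : ω * b - ω * a = 2 * Real.pi * k := by
    rw [ha, hb, hr₀, hlam]
    field_simp
    ring
  have hcoseq : Real.cos (ω * (t - b)) = Real.cos (ω * (t - a)) := by
    have h := Real.cos_add_int_mul_two_pi (ω * (t - a)) (-(k:ℤ))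
    rw [← h]
    congr 1
    push_cast
    nlinarith [hkey]
  have hmidzero : (∫ τ in a..b, f τ) = 0 := by
    rw [hmidint, hval, hcoseq]; ring
  have hz1 : (∫ τ in (0:ℝ)..a, f τ) = 0 := by
    rw [intervalIntegral.integral_congr (g := fun _ => (0:ℝ))
      (by rw [uIcc_of_le h0a.le]; exact hzero1)]
    simp
  have hz2 : (∫ τ in b..t, f τ) = 0 := by
    rw [intervalIntegral.integral_congr (g := fun _ => (0:ℝ))
      (by rw [uIcc_of_le hbt.le]; exact hzero2)]
    simp
  have h1 : (∫ τ in a..b, f τ) + (∫ τ in b..t, f τ) = ∫ τ in a..t, f τ :=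
    intervalIntegral.integral_add_adjacent_intervals hint2 hint3
  have h2 : (∫ τ in (0:ℝ)..a, f τ) + (∫ τ in a..t, f τ) = ∫ τ in (0:ℝ)..t, f τ :=
    intervalIntegral.integral_add_adjacent_intervals hint1 (hint2.trans hint3)
  have htot : (∫ τ in (0:ℝ)..t, f τ) = 0 := by
    rw [← h2, ← h1, hz1, hz2, hmidzero]; ring
  rw [htot]
  ring
end

section
/- Work in ℝ³ with the Euclidean norm and inner product; write ŵ = w/‖w‖ for the unit vector in the direction of a nonzero vector w. Let c > 0, λ > 0, ã_s ∈ ℝ, and let x_d, x_m ∈ ℝ³ with x_d ≠ 0 and x_m ≠ x_d. Set φ_m = π + 2π(‖x_d − x_m‖ − ‖x_d‖)/λ and ã_m = ã_s ‖x_d − x_m‖/‖x_d‖, and define u(x,t) = ã_s (1/‖x‖) sin(2π(ct − ‖x‖)/λ) + ã_m (1/‖x − x_m‖) sin(2π(ct − ‖x − x_m‖)/λ + φ_m). Then for every t, the spatial gradient of u(·,t) at x_d equals ( ã_s/(λ‖x_d‖) ) ( (λ/‖x_d − x_m‖) (x_d − x_m)^ − (λ/‖x_d‖) x̂_d ) sin(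 2π(ct − ‖x_d‖)/λ ) + ( 2π ã_s/(λ‖x_d‖) ) ( (x_d − x_m)^ − x̂_d ) cos( 2π(ct − ‖x_d‖)/λ ). -/
open Real

lemma aux_fderiv_norm {E : Type*} [NormedAddCommGroup E] [InnerProductSpace ℝ E]
    {x : E} (hx : x ≠ 0) :
    HasFDerivAt (fun y : E => ‖y‖) (‖x‖⁻¹ • innerSL ℝ x) x := by
  have hx2 : (‖x‖ : ℝ) ^ 2 ≠ 0 := pow_ne_zero 2 (norm_ne_zero_iff.mpr hx)
  have h1 := (hasStrictFDerivAt_norm_sq x).hasFDerivAt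
  have h2 : HasDerivAt Real.sqrt (1 / (2 * Real.sqrt (‖x‖ ^ 2))) (‖x‖ ^ 2) :=
    Real.hasDerivAt_sqrt hx2
  have h3 := h2.comp_hasFDerivAt x h1
  have hfun : (Real.sqrt ∘ fun y : E => ‖y‖ ^ 2) = fun y : E => ‖y‖ :=
    funext fun y => Real.sqrt_sq (norm_nonneg y)
  rw [← hfun]
  refine h3.congr_fderiv ?_
  ext y
  simp [Real.sqrt_sq (norm_nonneg x), real_inner_smul_left]
  field_simp

lemma aux_grad {E : Type*} [NormedAddCommGroup E] [InnerProductSpace ℝ E] [CompleteSpace E]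
    {x xm : E} (hx : x ≠ 0) (hs : x - xm ≠ 0)
    {g1 g2 : ℝ → ℝ} {D1 D2 : ℝ}
    (h1 : HasDerivAt g1 D1 ‖x‖) (h2 : HasDerivAt g2 D2 ‖x - xm‖) :
    HasGradientAt (fun y => g1 ‖y‖ + g2 ‖y - xm‖)
      ((D1 * ‖x‖⁻¹) • x + (D2 * ‖x - xm‖⁻¹) • (x - xm)) x := by
  rw [hasGradientAt_iff_hasFDerivAt]
  have hn1 := aux_fderiv_norm hx
  have hsub : HasFDerivAt (fun y : E => y - xm) (ContinuousLinearMap.id ℝ E) x :=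
    (hasFDerivAt_id x).sub_const xm
  have hn2 : HasFDerivAt (fun y : E => ‖y - xm‖) (‖x - xm‖⁻¹ • innerSL ℝ (x - xm)) x := by
    have := (aux_fderiv_norm hs).comp x hsub
    simpa [Function.comp_def] using this
  have hG1 := h1.comp_hasFDerivAt x hn1
  have hG2 := h2.comp_hasFDerivAt x hn2
  have hF := hG1.add hG2
  have hLeq : (InnerProductSpace.toDual ℝ E)
      ((D1 * ‖x‖⁻¹) • x + (D2 * ‖x - xm‖⁻¹) • (x - xm))
      = D1 • (‖x‖⁻¹ • innerSL ℝ x) + D2 • (‖x - xm‖⁻¹ • innerSL ℝ (x - xm)) := by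
    ext y
    simp [InnerProductSpace.toDual_apply_apply, inner_add_left, real_inner_smul_left]
    ring
  rw [hLeq]
  exact hF

/-- Gradient of the masked field at the sensor location. With
`φ_m = π + 2π(‖x_d − x_m‖ − ‖x_d‖)/λ`, `ã_m = ã_s ‖x_d − x_m‖/‖x_d‖`, the spatial
gradient of the total field `u(·,t)` at `x_d` equals
`(ã_s/(λ‖x_d‖)) ((λ/‖x_d−x_m‖)(x_d−x_m)^ − (λ/‖x_d‖)x̂_d) sin(2π(ct−‖x_d‖)/λ)
 + (2πã_s/(λ‖x_d‖)) ((x_d−x_m)^ − x̂_d) cos(2π(ct−‖x_d‖)/λ)`,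
where `ŵ = w/‖w‖`. -/
theorem stmt_16 (c lam as : ℝ) (hc : 0 < c) (hlam : 0 < lam)
    (xd xm : EuclideanSpace ℝ (Fin 3)) (hxd : xd ≠ 0) (hxm : xm ≠ xd)
    (φm am : ℝ)
    (hφ : φm = Real.pi + 2 * Real.pi * (‖xd - xm‖ - ‖xd‖) / lam)
    (ham : am = as * ‖xd - xm‖ / ‖xd‖)
    (u : EuclideanSpace ℝ (Fin 3) → ℝ → ℝ)
    (hu : ∀ x t, u x t
      = as * (1 / ‖x‖) * Real.sin (2 * Real.pi * (c * t - ‖x‖) / lam)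
        + am * (1 / ‖x - xm‖) * Real.sin (2 * Real.pi * (c * t - ‖x - xm‖) / lam + φm)) :
    ∀ t : ℝ,
      gradient (fun x => u x t) xd
        = ((as / (lam * ‖xd‖)) * Real.sin (2 * Real.pi * (c * t - ‖xd‖) / lam)) •
              ((lam / ‖xd - xm‖) • (‖xd - xm‖⁻¹ • (xd - xm))
                - (lam / ‖xd‖) • (‖xd‖⁻¹ • xd))
          + ((2 * Real.pi * as / (lam * ‖xd‖))
                * Real.cos (2 * Real.pi * (c * t - ‖xd‖) / lam)) •
              ((‖xd - xm‖⁻¹ • (xd - xm)) - (‖xd‖⁻¹ • xd)) := by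
  intro t
  have hs : xd - xm ≠ 0 := sub_ne_zero.mpr hxm.symm
  have hp : (‖xd‖ : ℝ) ≠ 0 := norm_ne_zero_iff.mpr hxd
  have hq : (‖xd - xm‖ : ℝ) ≠ 0 := norm_ne_zero_iff.mpr hs
  have hl : lam ≠ 0 := hlam.ne'
  -- derivative of the first radial profile
  have hinv1 : HasDerivAt (fun r : ℝ => as * (1 / r)) (as * -(‖xd‖ ^ 2)⁻¹) ‖xd‖ := by
    simpa [one_div] using (hasDerivAt_inv hp).const_mul as
  have hlin1 : HasDerivAt (fun r : ℝ => 2 * Real.pi * (c * t - r) / lam)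
      (2 * Real.pi * -1 / lam) ‖xd‖ :=
    (((hasDerivAt_id ‖xd‖).const_sub (c * t)).const_mul (2 * Real.pi)).div_const lam
  have hsin1 : HasDerivAt (fun r : ℝ => Real.sin (2 * Real.pi * (c * t - r) / lam))
      (Real.cos (2 * Real.pi * (c * t - ‖xd‖) / lam) * (2 * Real.pi * -1 / lam)) ‖xd‖ :=
    (Real.hasDerivAt_sin _).comp _ hlin1
  have hg1 : HasDerivAt
      (fun r : ℝ => as * (1 / r) * Real.sin (2 * Real.pi * (c * t - r) / lam))
      (-(as / ‖xd‖ ^ 2) * Real.sin (2 * Real.pi * (c * t - ‖xd‖) / lam)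
        - (2 * Real.pi * as / (lam * ‖xd‖)) * Real.cos (2 * Real.pi * (c * t - ‖xd‖) / lam))
      ‖xd‖ := by
    have := hinv1.mul hsin1
    refine this.congr_deriv ?_
    field_simp
    ring
  -- derivative of the second radial profile
  have hinv2 : HasDerivAt (fun r : ℝ => am * (1 / r)) (am * -(‖xd - xm‖ ^ 2)⁻¹) ‖xd - xm‖ := by
    simpa [one_div] using (hasDerivAt_inv hq).const_mul am
  have hlin2 : HasDerivAt (fun r : ℝ => 2 * Real.pi * (c * t - r) / lam + φm)
      (2 * Real.pi * -1 / lam) ‖xd - xm‖ :=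
    ((((hasDerivAt_id ‖xd - xm‖).const_sub (c * t)).const_mul (2 * Real.pi)).div_const
      lam).add_const φm
  have hsin2 : HasDerivAt (fun r : ℝ => Real.sin (2 * Real.pi * (c * t - r) / lam + φm))
      (Real.cos (2 * Real.pi * (c * t - ‖xd - xm‖) / lam + φm) * (2 * Real.pi * -1 / lam))
      ‖xd - xm‖ :=
    (Real.hasDerivAt_sin _).comp _ hlin2
  have hg2 : HasDerivAt
      (fun r : ℝ => am * (1 / r) * Real.sin (2 * Real.pi * (c * t - r) / lam + φm))
      (-(am / ‖xd - xm‖ ^ 2) * Real.sin (2 * Real.pi * (c * t - ‖xd - xm‖) / lam + φm)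
        - (2 * Real.pi * am / (lam * ‖xd - xm‖))
            * Real.cos (2 * Real.pi * (c * t - ‖xd - xm‖) / lam + φm))
      ‖xd - xm‖ := by
    have := hinv2.mul hsin2
    refine this.congr_deriv ?_
    field_simp
    ring
  have H : HasGradientAt
      (fun y : EuclideanSpace ℝ (Fin 3) =>
        as * (1 / ‖y‖) * Real.sin (2 * Real.pi * (c * t - ‖y‖) / lam)
          + am * (1 / ‖y - xm‖) * Real.sin (2 * Real.pi * (c * t - ‖y - xm‖) / lam + φm))
      (((-(as / ‖xd‖ ^ 2) * Real.sin (2 * Real.pi * (c * t - ‖xd‖) / lam)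
          - (2 * Real.pi * as / (lam * ‖xd‖))
              * Real.cos (2 * Real.pi * (c * t - ‖xd‖) / lam)) * ‖xd‖⁻¹) • xd
        + ((-(am / ‖xd - xm‖ ^ 2) * Real.sin (2 * Real.pi * (c * t - ‖xd - xm‖) / lam + φm)
          - (2 * Real.pi * am / (lam * ‖xd - xm‖))
              * Real.cos (2 * Real.pi * (c * t - ‖xd - xm‖) / lam + φm)) * ‖xd - xm‖⁻¹)
            • (xd - xm)) xd :=
    aux_grad hxd hs hg1 hg2
  have hfun : (fun x => u x t)
      = fun y : EuclideanSpace ℝ (Fin 3) =>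
          as * (1 / ‖y‖) * Real.sin (2 * Real.pi * (c * t - ‖y‖) / lam)
            + am * (1 / ‖y - xm‖) * Real.sin (2 * Real.pi * (c * t - ‖y - xm‖) / lam + φm) :=
    funext fun y => hu y t
  rw [hfun, H.gradient]
  have hθ : 2 * Real.pi * (c * t - ‖xd - xm‖) / lam + φm
      = 2 * Real.pi * (c * t - ‖xd‖) / lam + Real.pi := by
    rw [hφ]; field_simp; ring
  rw [hθ, Real.sin_add_pi, Real.cos_add_pi, ham]
  match_scalars <;> field_simp <;> ring
end

section
/- Work in ℝ³ with the Euclidean norm and inner product; write x̂_d = x_d/‖x_d‖. Let c > 0, λ > 0, ã_s ∈ ℝ, x_d ∈ ℝ³ with x_d ≠ 0, and let β < 1 with x_m = β x_d. Set φ_m = π + 2π(‖x_d − x_m‖ − ‖x_d‖)/λ and ã_m = ã_s ‖x_d − x_m‖/‖x_d‖, and define u(x,t) = ã_s (1/‖x‖) sin(2π(ct − ‖x‖)/λ) + ã_m (1/‖x − x_m‖) sin(2π(ct − ‖x − x_m‖)/λ + φ_m). Then for every t, the spatial gradient of u(·,t) at x_d equals ã_s ( x̂_d / ‖x_d‖²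 ) ( β/(1 − β) ) sin( 2π(ct − ‖x_d‖)/λ ). In particular, the O(1/λ) dominant part of the gradient vanishes when the masking point-force is placed on the ray from the origin through x_d. -/
open Real

section aux
variable {F : Type*} [NormedAddCommGroup F] [InnerProductSpace ℝ F] [CompleteSpace F]

lemma myGradNorm {x : F} (hx : x ≠ 0) :
    HasGradientAt (fun y : F => ‖y‖) (‖x‖⁻¹ • x) x := by
  have hnx : ‖x‖ ≠ 0 := norm_ne_zero_iff.mpr hx
  have h1 : HasFDerivAt (fun y : F => ‖y‖ ^ 2) (2 • (innerSL ℝ x)) x :=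
    (hasStrictFDerivAt_norm_sq x).hasFDerivAt
  have hx2 : (‖x‖ ^ 2 : ℝ) ≠ 0 := pow_ne_zero _ hnx
  have h2 : HasDerivAt Real.sqrt (1 / (2 * Real.sqrt (‖x‖ ^ 2))) (‖x‖ ^ 2) :=
    Real.hasDerivAt_sqrt hx2
  have h3 : HasFDerivAt (fun y : F => Real.sqrt (‖y‖ ^ 2))
      ((ContinuousLinearMap.smulRight (1 : ℝ →L[ℝ] ℝ)
        (1 / (2 * Real.sqrt (‖x‖ ^ 2)))).comp (2 • (innerSL ℝ x))) x :=
    h2.hasFDerivAt.comp x h1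
  have h4 : HasFDerivAt (fun y : F => ‖y‖)
      ((ContinuousLinearMap.smulRight (1 : ℝ →L[ℝ] ℝ)
        (1 / (2 * Real.sqrt (‖x‖ ^ 2)))).comp (2 • (innerSL ℝ x))) x :=
    h3.congr_of_eventuallyEq
      (Filter.Eventually.of_forall fun y => (Real.sqrt_sq (norm_nonneg y)).symm)
  rw [hasGradientAt_iff_hasFDerivAt]
  refine h4.congr_fderiv ?_
  ext y
  simp only [InnerProductSpace.toDual_apply_apply, ContinuousLinearMap.comp_apply,
    ContinuousLinearMap.smul_apply, innerSL_apply_apply, ContinuousLinearMap.smulRight_apply,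
    ContinuousLinearMap.one_apply, real_inner_smul_left, smul_eq_mul,
    Real.sqrt_sq (norm_nonneg x)]
  field_simp
  ring

lemma myGradNormSub (p : F) {x : F} (h : x - p ≠ 0) :
    HasGradientAt (fun y : F => ‖y - p‖) (‖x - p‖⁻¹ • (x - p)) x := by
  have h1 := (myGradNorm h).hasFDerivAt
  have h2 : HasFDerivAt (fun y : F => y - p) (ContinuousLinearMap.id ℝ F) x :=
    (hasFDerivAt_id x).sub_const p
  have h3 : HasFDerivAt (fun y : F => ‖y - p‖)
      ((InnerProductSpace.toDual ℝ F (‖x - p‖⁻¹ • (x - p))).comp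
        (ContinuousLinearMap.id ℝ F)) x := h1.comp x h2
  rw [hasGradientAt_iff_hasFDerivAt]
  rwa [ContinuousLinearMap.comp_id] at h3

lemma myGradComp {f : F → ℝ} {v : F} {x : F} (hf : HasGradientAt f v x)
    {φ : ℝ → ℝ} {a : ℝ} (hφ : HasDerivAt φ a (f x)) :
    HasGradientAt (fun y => φ (f y)) (a • v) x := by
  have h : HasFDerivAt (fun y => φ (f y))
      ((ContinuousLinearMap.smulRight (1 : ℝ →L[ℝ] ℝ) a).comp
        (InnerProductSpace.toDual ℝ F v)) x :=
    hφ.hasFDerivAt.comp x hf.hasFDerivAt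
  rw [hasGradientAt_iff_hasFDerivAt]
  refine h.congr_fderiv ?_
  ext y
  simp only [InnerProductSpace.toDual_apply_apply, ContinuousLinearMap.comp_apply,
    ContinuousLinearMap.smulRight_apply, ContinuousLinearMap.one_apply,
    real_inner_smul_left, smul_eq_mul]
  ring

lemma myGradAdd {f g : F → ℝ} {v w : F} {x : F}
    (hf : HasGradientAt f v x) (hg : HasGradientAt g w x) :
    HasGradientAt (fun y => f y + g y) (v + w) x := by
  rw [hasGradientAt_iff_hasFDerivAt] at hf hg ⊢
  rw [map_add]
  exact hf.add hg

end aux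

set_option maxHeartbeats 1000000 in
/-- Collinear placement of the masking force: with `x_m = β x_d`, `β < 1`, phase shift
`φ_m = π + 2π(‖x_d − x_m‖ − ‖x_d‖)/λ` and amplitude `ã_m = ã_s ‖x_d − x_m‖/‖x_d‖`,
the spatial gradient of the total field at `x_d` reduces to
`ã_s (x̂_d/‖x_d‖²) (β/(1−β)) sin(2π(ct−‖x_d‖)/λ)`: the `O(1/λ)` dominant part
vanishes. -/
theorem stmt_17 (c lam as : ℝ) (hc : 0 < c) (hlam : 0 < lam)
    (xd : EuclideanSpace ℝ (Fin 3)) (hxd : xd ≠ 0)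
    (β : ℝ) (hβ : β < 1)
    (xm : EuclideanSpace ℝ (Fin 3)) (hxm : xm = β • xd)
    (φm am : ℝ)
    (hφ : φm = Real.pi + 2 * Real.pi * (‖xd - xm‖ - ‖xd‖) / lam)
    (ham : am = as * ‖xd - xm‖ / ‖xd‖)
    (u : EuclideanSpace ℝ (Fin 3) → ℝ → ℝ)
    (hu : ∀ x t, u x t
      = as * (1 / ‖x‖) * Real.sin (2 * Real.pi * (c * t - ‖x‖) / lam)
        + am * (1 / ‖x - xm‖) * Real.sin (2 * Real.pi * (c * t - ‖x - xm‖) / lam + φm)) :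
    ∀ t : ℝ,
      gradient (fun x => u x t) xd
        = ((as / ‖xd‖ ^ 2) * (β / (1 - β))
            * Real.sin (2 * Real.pi * (c * t - ‖xd‖) / lam)) • (‖xd‖⁻¹ • xd) := by
  intro t
  have hR : ‖xd‖ ≠ 0 := norm_ne_zero_iff.mpr hxd
  have h1β : (0:ℝ) < 1 - β := by linarith
  have hxdm : xd - xm = (1 - β) • xd := by rw [hxm, sub_smul, one_smul]
  have hxdm0 : xd - xm ≠ 0 := by
    rw [hxdm]; exact smul_ne_zero (ne_of_gt h1β) hxd
  have hr2 : ‖xd - xm‖ = (1 - β) * ‖xd‖ := by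
    rw [hxdm, norm_smul, Real.norm_eq_abs, abs_of_pos h1β]
  have hr2ne : ‖xd - xm‖ ≠ 0 := norm_ne_zero_iff.mpr hxdm0
  -- derivative of the first radial profile at R = ‖xd‖
  have hθ1 : HasDerivAt (fun r : ℝ => 2 * Real.pi * (c * t - r) / lam)
      (2 * Real.pi * (-1) / lam) ‖xd‖ :=
    (((hasDerivAt_id ‖xd‖).const_sub (c * t)).const_mul (2 * Real.pi)).div_const lam
  have hsin1 : HasDerivAt (fun r : ℝ => Real.sin (2 * Real.pi * (c * t - r) / lam))
      (Real.cos (2 * Real.pi * (c * t - ‖xd‖) / lam) * (2 * Real.pi * (-1) / lam)) ‖xd‖ :=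
    hθ1.sin
  have hφ1 : HasDerivAt
      (fun r : ℝ => as * r⁻¹ * Real.sin (2 * Real.pi * (c * t - r) / lam))
      (as * (-(‖xd‖ ^ 2)⁻¹) * Real.sin (2 * Real.pi * (c * t - ‖xd‖) / lam)
        + as * ‖xd‖⁻¹ *
          (Real.cos (2 * Real.pi * (c * t - ‖xd‖) / lam) * (2 * Real.pi * (-1) / lam))) ‖xd‖ := by
    have := ((hasDerivAt_inv hR).const_mul as).mul hsin1
    simpa [Pi.mul_def, mul_comm, mul_assoc, mul_left_comm] using this
  -- derivative of the second radial profile at r₂ = ‖xd - xm‖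
  have hθ2 : HasDerivAt (fun r : ℝ => 2 * Real.pi * (c * t - r) / lam + φm)
      (2 * Real.pi * (-1) / lam) ‖xd - xm‖ :=
    ((((hasDerivAt_id ‖xd - xm‖).const_sub (c * t)).const_mul
      (2 * Real.pi)).div_const lam).add_const φm
  have hsin2 : HasDerivAt (fun r : ℝ => Real.sin (2 * Real.pi * (c * t - r) / lam + φm))
      (Real.cos (2 * Real.pi * (c * t - ‖xd - xm‖) / lam + φm) * (2 * Real.pi * (-1) / lam))
      ‖xd - xm‖ := hθ2.sin
  have hφ2 : HasDerivAt
      (fun r : ℝ => am * r⁻¹ * Real.sin (2 * Real.pi * (c * t - r) / lam + φm))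
      (am * (-(‖xd - xm‖ ^ 2)⁻¹) * Real.sin (2 * Real.pi * (c * t - ‖xd - xm‖) / lam + φm)
        + am * ‖xd - xm‖⁻¹ *
          (Real.cos (2 * Real.pi * (c * t - ‖xd - xm‖) / lam + φm)
            * (2 * Real.pi * (-1) / lam))) ‖xd - xm‖ := by
    have := ((hasDerivAt_inv hr2ne).const_mul am).mul hsin2
    simpa [Pi.mul_def, mul_comm, mul_assoc, mul_left_comm] using this
  -- gradients of the two terms
  have hg1 : HasGradientAt
      (fun x : EuclideanSpace ℝ (Fin 3) =>
        as * ‖x‖⁻¹ * Real.sin (2 * Real.pi * (c * t - ‖x‖) / lam))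
      ((as * (-(‖xd‖ ^ 2)⁻¹) * Real.sin (2 * Real.pi * (c * t - ‖xd‖) / lam)
        + as * ‖xd‖⁻¹ *
          (Real.cos (2 * Real.pi * (c * t - ‖xd‖) / lam) * (2 * Real.pi * (-1) / lam)))
        • (‖xd‖⁻¹ • xd)) xd :=
    myGradComp (myGradNorm hxd) hφ1
  have hg2 : HasGradientAt
      (fun x : EuclideanSpace ℝ (Fin 3) =>
        am * ‖x - xm‖⁻¹ * Real.sin (2 * Real.pi * (c * t - ‖x - xm‖) / lam + φm))
      ((am * (-(‖xd - xm‖ ^ 2)⁻¹) * Real.sin (2 * Real.pi * (c * t - ‖xd - xm‖) / lam + φm)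
        + am * ‖xd - xm‖⁻¹ *
          (Real.cos (2 * Real.pi * (c * t - ‖xd - xm‖) / lam + φm)
            * (2 * Real.pi * (-1) / lam)))
        • (‖xd - xm‖⁻¹ • (xd - xm))) xd :=
    myGradComp (myGradNormSub xm hxdm0) hφ2
  have hsum := myGradAdd hg1 hg2
  have hfun : (fun x => u x t)
      = fun x : EuclideanSpace ℝ (Fin 3) =>
          as * ‖x‖⁻¹ * Real.sin (2 * Real.pi * (c * t - ‖x‖) / lam)
          + am * ‖x - xm‖⁻¹ * Real.sin (2 * Real.pi * (c * t - ‖x - xm‖) / lam + φm) := by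
    funext x; rw [hu]; ring
  rw [hfun, hsum.gradient]
  -- now a vector identity
  have hphase : 2 * Real.pi * (c * t - ‖xd - xm‖) / lam + φm
      = 2 * Real.pi * (c * t - ‖xd‖) / lam + Real.pi := by
    rw [hφ]; field_simp; ring
  rw [hphase, Real.sin_add_pi, Real.cos_add_pi, hr2, hxdm]
  rw [smul_smul, smul_smul, smul_smul, smul_smul, ← add_smul]
  congr 1
  rw [ham, hr2]
  have hπ := Real.pi_ne_zero
  field_simp
  ring
end

section
/- Work in ℝ³ with the Euclidean norm and inner product; write x̂_d = x_d/‖x_d‖. Let c > 0, λ > 0, ã_s ∈ ℝ, x_d ∈ ℝ³ with x_d ≠ 0, and let 0 < ε_s < ‖x_d‖; set β_s = ε_s/‖x_d‖, β₁ = β_s, β₂ = −β_s, and x_m^(j) = β_j x_d for j = 1, 2. For j = 1, 2 define φ_j = π (1 − 2 β_j ‖x_d‖ / λ) and u_j(x,t) = ã_s (1 − β_j) (1/‖x − x_m^(j)‖) sin( 2π(ct − ‖x − x_m^(j)‖)/λ + φ_j ). Define the total masked field u(x,t) = ã_s (1/‖x‖) sin(2π(ct − ‖x‖)/λ) + ((1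 − β_s)/2) u₁(x,t) + ((1 + β_s)/2) u₂(x,t). Then for every t ∈ ℝ: (i) u(x_d, t) = 0, and (ii) the spatial gradient of u(·,t) at x_d is the zero vector. -/
open Real

lemma hasFDerivAt_norm_sub (a p : EuclideanSpace ℝ (Fin 3)) (hp : p ≠ a) :
    HasFDerivAt (fun x => ‖x - a‖) (‖p - a‖⁻¹ • innerSL ℝ (p - a)) p := by
  have hne : ‖p - a‖ ≠ 0 := norm_ne_zero_iff.mpr (sub_ne_zero.mpr hp)
  have hne2 : ‖p - a‖ ^ 2 ≠ 0 := pow_ne_zero 2 hne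
  have h1 : HasFDerivAt (fun x : EuclideanSpace ℝ (Fin 3) => ‖x - a‖ ^ 2)
      (2 • (innerSL ℝ (p - a)).comp (ContinuousLinearMap.id ℝ _)) p :=
    ((hasFDerivAt_id p).sub_const a).norm_sq
  have h2 := h1.sqrt hne2
  have hfun : (fun x : EuclideanSpace ℝ (Fin 3) => Real.sqrt (‖x - a‖ ^ 2))
      = fun x => ‖x - a‖ := by
    funext x; rw [Real.sqrt_sq (norm_nonneg _)]
  rw [hfun] at h2
  refine h2.congr_fderiv ?_
  ext y
  rw [Real.sqrt_sq (norm_nonneg _)]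
  simp only [ContinuousLinearMap.smul_apply, ContinuousLinearMap.comp_apply,
    ContinuousLinearMap.id_apply, innerSL_apply_apply, smul_eq_mul, nsmul_eq_mul,
    Nat.cast_ofNat, ContinuousLinearMap.coe_smul', Pi.smul_apply]
  field_simp

lemma hasDerivAt_wave (A b lam φ ρ : ℝ) (hρ : ρ ≠ 0) :
    HasDerivAt (fun s => A * (1 / s) * Real.sin (2 * Real.pi * (b - s) / lam + φ))
      (A * (-(1 / ρ ^ 2)) * Real.sin (2 * Real.pi * (b - ρ) / lam + φ)
        + A * (1 / ρ) * (Real.cos (2 * Real.pi * (b - ρ) / lam + φ) * (-(2 * Real.pi / lam)))) ρ := by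
  have hA : HasDerivAt (fun s : ℝ => A * (1 / s)) (A * (-(1 / ρ ^ 2))) ρ := by
    simpa [one_div] using (hasDerivAt_inv hρ).const_mul A
  have hin : HasDerivAt (fun s : ℝ => 2 * Real.pi * (b - s) / lam + φ)
      (-(2 * Real.pi / lam)) ρ := by
    have h := ((((hasDerivAt_id ρ).const_sub b).const_mul (2 * Real.pi)).div_const lam).add_const φ
    refine h.congr_deriv ?_
    ring
  have hsin : HasDerivAt (fun s : ℝ => Real.sin (2 * Real.pi * (b - s) / lam + φ))
      (Real.cos (2 * Real.pi * (b - ρ) / lam + φ) * (-(2 * Real.pi / lam))) ρ :=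
    (Real.hasDerivAt_sin _).comp ρ hin
  exact hA.mul hsin

lemma hasFDerivAt_wave_norm (F : ℝ → ℝ) (d : ℝ) (a p : EuclideanSpace ℝ (Fin 3)) (hp : p ≠ a)
    (hF : HasDerivAt F d ‖p - a‖) :
    HasFDerivAt (fun x => F ‖x - a‖) ((d * ‖p - a‖⁻¹) • innerSL ℝ (p - a)) p := by
  have h := hF.comp_hasFDerivAt p (hasFDerivAt_norm_sub a p hp)
  refine h.congr_fderiv ?_
  rw [smul_smul]

/-- Optimal two-point-force masking configuration: the weighted combination with
weights `(1−β_s)/2` and `(1+β_s)/2` of the two individually optimized point-forces at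
`±ε_s x̂_d` annihilates both the total field and its spatial gradient at the sensor
location `x_d`, at all times. -/
theorem stmt_18 (c lam as : ℝ) (hc : 0 < c) (hlam : 0 < lam)
    (xd : EuclideanSpace ℝ (Fin 3)) (hxd : xd ≠ 0)
    (εs : ℝ) (hεs : 0 < εs) (hεs' : εs < ‖xd‖)
    (βs β₁ β₂ : ℝ) (hβs : βs = εs / ‖xd‖) (hβ₁ : β₁ = βs) (hβ₂ : β₂ = -βs)
    (xm₁ xm₂ : EuclideanSpace ℝ (Fin 3)) (hxm₁ : xm₁ = β₁ • xd) (hxm₂ : xm₂ = β₂ • xd)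
    (φ₁ φ₂ : ℝ)
    (hφ₁ : φ₁ = Real.pi * (1 - 2 * β₁ * ‖xd‖ / lam))
    (hφ₂ : φ₂ = Real.pi * (1 - 2 * β₂ * ‖xd‖ / lam))
    (u₁ u₂ u : EuclideanSpace ℝ (Fin 3) → ℝ → ℝ)
    (hu₁ : ∀ x t, u₁ x t
      = as * (1 - β₁) * (1 / ‖x - xm₁‖) *
          Real.sin (2 * Real.pi * (c * t - ‖x - xm₁‖) / lam + φ₁))
    (hu₂ : ∀ x t, u₂ x t
      = as * (1 - β₂) * (1 / ‖x - xm₂‖) *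
          Real.sin (2 * Real.pi * (c * t - ‖x - xm₂‖) / lam + φ₂))
    (hu : ∀ x t, u x t
      = as * (1 / ‖x‖) * Real.sin (2 * Real.pi * (c * t - ‖x‖) / lam)
        + ((1 - βs) / 2) * u₁ x t + ((1 + βs) / 2) * u₂ x t) :
    ∀ t : ℝ, u xd t = 0 ∧ gradient (fun x => u x t) xd = 0 := by
  subst hβ₁ hβ₂ hφ₁ hφ₂ hxm₁ hxm₂
  intro t
  have hr : (0:ℝ) < ‖xd‖ := norm_pos_iff.mpr hxd
  have hrne : ‖xd‖ ≠ 0 := ne_of_gt hr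
  have hβpos : 0 < β₁ := by rw [hβs]; positivity
  have hβlt : β₁ < 1 := by rw [hβs, div_lt_one hr]; exact hεs'
  have h1m : (0:ℝ) < 1 - β₁ := by linarith
  have h1p : (0:ℝ) < 1 + β₁ := by linarith
  have hlam' : lam ≠ 0 := ne_of_gt hlam
  have hv₁ : xd - β₁ • xd = (1 - β₁) • xd := by module
  have hv₂ : xd - (-β₁) • xd = (1 + β₁) • xd := by module
  have hn₁ : ‖xd - β₁ • xd‖ = (1 - β₁) * ‖xd‖ := by
    rw [hv₁, norm_smul, Real.norm_eq_abs, abs_of_pos h1m]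
  have hn₂ : ‖xd - (-β₁) • xd‖ = (1 + β₁) * ‖xd‖ := by
    rw [hv₂, norm_smul, Real.norm_eq_abs, abs_of_pos h1p]
  have hn₁' : ‖(1 - β₁) • xd‖ = (1 - β₁) * ‖xd‖ := by
    rw [norm_smul, Real.norm_eq_abs, abs_of_pos h1m]
  have hn₂' : ‖(1 + β₁) • xd‖ = (1 + β₁) * ‖xd‖ := by
    rw [norm_smul, Real.norm_eq_abs, abs_of_pos h1p]
  have harg₁ : 2 * Real.pi * (c * t - (1 - β₁) * ‖xd‖) / lam
        + Real.pi * (1 - 2 * β₁ * ‖xd‖ / lam)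
      = 2 * Real.pi * (c * t - ‖xd‖) / lam + Real.pi := by
    field_simp
    ring
  have harg₂ : 2 * Real.pi * (c * t - (1 + β₁) * ‖xd‖) / lam
        + Real.pi * (1 - 2 * (-β₁) * ‖xd‖ / lam)
      = 2 * Real.pi * (c * t - ‖xd‖) / lam + Real.pi := by
    field_simp
    ring
  constructor
  · rw [hu, hu₁, hu₂, hn₁, hn₂, harg₁, harg₂, Real.sin_add_pi]
    field_simp
    ring
  · -- gradient part
    have hne₁ : xd ≠ β₁ • xd := by
      intro h
      rw [← sub_eq_zero, hv₁] at h
      exact hxd (by simpa [smul_eq_zero, ne_of_gt h1m] using h)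
    have hne₂ : xd ≠ (-β₁) • xd := by
      intro h
      rw [← sub_eq_zero, hv₂] at h
      exact hxd (by simpa [smul_eq_zero, ne_of_gt h1p] using h)
    have hne₀ : xd ≠ (0 : EuclideanSpace ℝ (Fin 3)) := hxd
    have hρ₀ : ‖xd - (0 : EuclideanSpace ℝ (Fin 3))‖ = ‖xd‖ := by rw [sub_zero]
    -- term 0
    have hD₀ := hasDerivAt_wave as (c * t) lam 0 ‖xd‖ hrne
    have H₀ := hasFDerivAt_wave_norm _ _ 0 xd hne₀ (hρ₀ ▸ hD₀)
    -- term 1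
    have hρ₁ne : (1 - β₁) * ‖xd‖ ≠ 0 := by positivity
    have hD₁ := hasDerivAt_wave (as * (1 - β₁)) (c * t) lam
      (Real.pi * (1 - 2 * β₁ * ‖xd‖ / lam)) ((1 - β₁) * ‖xd‖) hρ₁ne
    have H₁ := hasFDerivAt_wave_norm _ _ (β₁ • xd) xd hne₁ (hn₁ ▸ hD₁)
    -- term 2
    have hρ₂ne : (1 + β₁) * ‖xd‖ ≠ 0 := by positivity
    have hD₂ := hasDerivAt_wave (as * (1 - -β₁)) (c * t) lam
      (Real.pi * (1 - 2 * (-β₁) * ‖xd‖ / lam)) ((1 + β₁) * ‖xd‖) hρ₂ne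
    have H₂ := hasFDerivAt_wave_norm _ _ ((-β₁) • xd) xd hne₂ (hn₂ ▸ hD₂)
    have Htot := (H₀.add (H₁.const_mul ((1 - β₁) / 2))).add (H₂.const_mul ((1 + β₁) / 2))
    have hfun : (fun x => u x t)
        = fun x : EuclideanSpace ℝ (Fin 3) =>
          (fun s : ℝ => as * (1 / s) * Real.sin (2 * Real.pi * (c * t - s) / lam + 0))
              ‖x - (0 : EuclideanSpace ℝ (Fin 3))‖
          + (1 - β₁) / 2 * (fun s : ℝ => as * (1 - β₁) * (1 / s) *
              Real.sin (2 * Real.pi * (c * t - s) / lam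
                + Real.pi * (1 - 2 * β₁ * ‖xd‖ / lam))) ‖x - β₁ • xd‖
          + (1 + β₁) / 2 * (fun s : ℝ => as * (1 - -β₁) * (1 / s) *
              Real.sin (2 * Real.pi * (c * t - s) / lam
                + Real.pi * (1 - 2 * (-β₁) * ‖xd‖ / lam))) ‖x - (-β₁) • xd‖ := by
      funext x
      rw [hu, hu₁, hu₂]
      simp only [sub_zero, add_zero]
    have Hu0 : HasFDerivAt (fun x => u x t)
        (0 : EuclideanSpace ℝ (Fin 3) →L[ℝ] ℝ) xd := by
      rw [hfun]
      refine Htot.congr_fderiv ?_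
      ext y
      simp only [ContinuousLinearMap.zero_apply, ContinuousLinearMap.add_apply,
        ContinuousLinearMap.smul_apply, innerSL_apply_apply, smul_eq_mul,
        sub_zero, hv₁, hv₂, hn₁, hn₂, hn₁', hn₂', real_inner_smul_left, hρ₀, add_zero]
      rw [harg₁, harg₂, Real.sin_add_pi, Real.cos_add_pi]
      field_simp
      ring
    have hgrad := Hu0.fderiv
    simp [gradient, hgrad]
end
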